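/- arXiv:1101.0761 — 7 statements merged into one kernel-verified Lean document; each statement's English description precedes it below -/
import Mathlib

section
/- Stiemke's Theorem: Let u_1, …, u_n be vectors in ℝ^m. Then either there exists α ∈ ℝ^n such that every component of the vector Σ_{i=1}^n α_i u_i is ≤ 0 and at least one component is strictly negative, or there exists w ∈ ℝ^m with all components strictly positive such that w · u_i = 0 for every i ∈ {1,…,n}. -/
/-!
Let `V` be the span of the `u i`. If `V` meets the standard simplex, a point of the intersection
is a nonnegative, nonzero combination of the `u i`, and its negative gives `α`. Otherwise, strictly
separate the compact simplex from the closed subspace `V` by a functional `f`: being bounded below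
on `V`, `f` vanishes there, and it is negative at every vertex `e j`, so `w j := -f (e j)` works.
-/

open Finset

theorem Submodule.linearMap_eq_zero_of_forall_lt {E : Type*} [AddCommGroup E] [Module ℝ E]
    (V : Submodule ℝ E) (f : E →ₗ[ℝ] ℝ) {b : ℝ} (hb : ∀ x ∈ V, b < f x) {x : E} (hx : x ∈ V) :
    f x = 0 := by
  by_contra h
  have := hb (((b - 1) / f x) • x) (V.smul_mem _ hx)
  rw [map_smul, smul_eq_mul, div_mul_cancel₀ _ h] at this
  linarith

theorem Submodule.exists_dual_eq_zero_and_neg_of_disjoint {E : Type*} [AddCommGroup E]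
    [TopologicalSpace E] [IsTopologicalAddGroup E] [Module ℝ E] [ContinuousSMul ℝ E]
    [LocallyConvexSpace ℝ E] (V : Submodule ℝ E) (hV : IsClosed (V : Set E)) {s : Set E}
    (hs : Convex ℝ s) (hsc : IsCompact s) (hsV : Disjoint s V) :
    ∃ f : StrongDual ℝ E, (∀ x ∈ V, f x = 0) ∧ ∀ a ∈ s, f a < 0 := by
  obtain ⟨f, a, b, hfs, hab, hfV⟩ := geometric_hahn_banach_compact_closed hs hsc V.convex hV hsV
  refine ⟨f, fun x hx => V.linearMap_eq_zero_of_forall_lt f.toLinearMap hfV hx, fun y hy => ?_⟩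
  have hb : b < 0 := by simpa using hfV 0 V.zero_mem
  linarith [hfs y hy]

theorem Submodule.exists_mem_stdSimplex_or_exists_pos_orthogonal {ι : Type*} [Fintype ι]
    (V : Submodule ℝ (ι → ℝ)) :
    (∃ x ∈ V, x ∈ stdSimplex ℝ ι) ∨ ∃ w : ι → ℝ, (∀ j, 0 < w j) ∧ ∀ v ∈ V, ∑ j, w j * v j = 0 := by
  classical
  by_cases hmeet : ∃ x ∈ V, x ∈ stdSimplex ℝ ι
  · exact .inl hmeet
  have hdisj : Disjoint (stdSimplex ℝ ι) V :=
    Set.disjoint_right.2 fun x hxV hxS => hmeet ⟨x, hxV, hxS⟩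
  obtain ⟨f, hfV, hfS⟩ := V.exists_dual_eq_zero_and_neg_of_disjoint V.closed_of_finiteDimensional
    (convex_stdSimplex ℝ ι) (isCompact_stdSimplex ℝ ι) hdisj
  refine .inr ⟨fun j => -f (if j = · then 1 else 0), fun j => ?_, fun v hv => ?_⟩
  · simpa using hfS _ (ite_eq_mem_stdSimplex ℝ j)
  · have hfv := (hfV v hv).symm.trans (LinearMap.pi_apply_eq_sum_univ f.toLinearMap v)
    simp only [neg_mul, sum_neg_distrib, neg_eq_zero]
    simpa [mul_comm] using hfv.symm

theorem exists_pos_of_mem_stdSimplex {𝕜 ι : Type*} [Semiring 𝕜] [LinearOrder 𝕜]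
    [IsStrictOrderedRing 𝕜] [Fintype ι] {x : ι → 𝕜} (hx : x ∈ stdSimplex 𝕜 ι) :
    ∃ j, 0 < x j := by
  by_contra! h
  exact (hx.2 ▸ sum_nonpos fun j _ => h j).not_gt zero_lt_one

/-- **Stiemke's Theorem.** For vectors `u 1, …, u n` in `ℝ^m`, either there is a
linear combination `∑ i, α i • u i` all of whose components are `≤ 0` with at least
one strictly negative, or there is a strictly positive vector `w` orthogonal to
every `u i`. -/
theorem stmt_0 (m n : ℕ) (u : Fin n → Fin m → ℝ) :
    (∃ α : Fin n → ℝ,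
      (∀ j : Fin m, (∑ i, α i * u i j) ≤ 0) ∧ (∃ j : Fin m, (∑ i, α i * u i j) < 0)) ∨
    (∃ w : Fin m → ℝ, (∀ j, 0 < w j) ∧ ∀ i : Fin n, (∑ j, w j * u i j) = 0) := by
  rcases (Submodule.span ℝ (Set.range u)).exists_mem_stdSimplex_or_exists_pos_orthogonal with
    ⟨x, hxV, hx⟩ | ⟨w, hw, hwV⟩
  · obtain ⟨c, rfl⟩ := (Submodule.mem_span_range_iff_exists_fun ℝ).1 hxV
    have hcomb : ∀ j, ∑ i, -c i * u i j = -(∑ i, c i • u i) j := fun j => by simp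
    obtain ⟨j, hj⟩ := exists_pos_of_mem_stdSimplex hx
    refine .inl ⟨-c, fun j => ?_, j, ?_⟩
    · simpa [hcomb] using hx.1 j
    · simpa [hcomb] using hj
  · exact .inr ⟨w, hw, fun i => hwV _ (Submodule.subset_span ⟨i, rfl⟩)⟩
end

section
/- Let C be a finite set of vectors in ℝ^N and let (x_n) be a sequence of points in the strictly positive orthant ℝ^N_{>0}. Then there exists a subsequence of (x_n) along which C is partitioned. -/
open Filter

/-- `vpow x v = ∏ i, (x i) ^ (v i)` (real exponents, with the convention `0^0 = 1`). -/
noncomputable def vpow {N : ℕ} (x v : Fin N → ℝ) : ℝ := ∏ i, x i ^ v i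

/-- The finite set of vectors `C ⊆ ℝ^N` is partitioned along the sequence `x` into the
ordered tiers `T 0 ≻ T 1 ≻ ⋯ ≻ T (P-1)` with constant `M > 1`. -/
def PartitionedAlong {N P : ℕ} (C : Finset (Fin N → ℝ)) (x : ℕ → Fin N → ℝ)
    (T : Fin P → Set (Fin N → ℝ)) (M : ℝ) : Prop :=
  1 < M ∧
  (∀ i, (T i).Nonempty) ∧
  (∀ i j, i ≠ j → Disjoint (T i) (T j)) ∧
  (⋃ i, T i) = (C : Set (Fin N → ℝ)) ∧
  (∀ i : Fin P, ∀ yj ∈ T i, ∀ yk ∈ T i, ∀ n : ℕ,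
    1 / M ≤ vpow (x n) (yk - yj) ∧ vpow (x n) (yk - yj) ≤ M) ∧
  (∀ i j : Fin P, i < j → ∀ yk ∈ T i, ∀ yj ∈ T j,
    Tendsto (fun n => vpow (x n) yk / vpow (x n) yj) atTop atTop)

/-!
Since `x ^ y = exp ⟪y, log x⟫` for `x > 0`, everything is governed by the finitely many gaps
`⟪a - b, log xₙ⟫`, `a b ∈ C`. Compactness of the extended reals gives a subsequence along which
each gap tends to `+∞`, to `-∞`, or to a finite limit (so stays bounded). Along it, rank each
`a ∈ C` by the number of `z ∈ C` whose gap over `a` tends to `+∞`: vectors of equal rank have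
bounded gaps and a smaller rank forces the gap to `+∞`, so the level sets of the rank, listed
in increasing order, are the tiers.
-/

open Finset Topology

lemma vpow_eq_exp_dotProduct {N : ℕ} {x : Fin N → ℝ} (hx : ∀ i, 0 < x i) (v : Fin N → ℝ) :
    vpow x v = Real.exp (v ⬝ᵥ fun i => Real.log (x i)) := by
  simp only [vpow, dotProduct, Real.exp_sum, Real.rpow_def_of_pos (hx _), mul_comm]

lemma partitionedAlong_of_tiers {N P : ℕ} {C : Finset (Fin N → ℝ)} {x : ℕ → Fin N → ℝ} {M : ℝ}
    (τ : C → Fin P) (hτ : Function.Surjective τ) (hM : 1 < M)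
    (hbdd : ∀ a b, τ a = τ b → ∀ n, 1 / M ≤ vpow (x n) (b - a) ∧ vpow (x n) (b - a) ≤ M)
    (hdom : ∀ a b, τ a < τ b →
      Tendsto (fun n => vpow (x n) a / vpow (x n) b) atTop atTop) :
    PartitionedAlong C x (fun i => Subtype.val '' (τ ⁻¹' {i})) M := by
  refine ⟨hM, fun i => ?_, fun i j hij => ?_, ?_, ?_, ?_⟩
  · obtain ⟨a, rfl⟩ := hτ i
    exact ⟨a, a, rfl, rfl⟩
  · exact (Set.disjoint_image_iff Subtype.val_injective).2
      ((Set.disjoint_singleton.2 hij).preimage τ)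
  · simp [← Set.image_iUnion, ← Set.preimage_iUnion, Set.iUnion_of_singleton]
  · rintro i _ ⟨a, rfl, rfl⟩ _ ⟨b, hb, rfl⟩
    exact hbdd a b hb.symm
  · rintro i j hij _ ⟨a, rfl, rfl⟩ _ ⟨b, rfl, rfl⟩
    exact hdom a b hij

lemma exists_subseq_tendsto_atTop_or_atBot_or_nhds {ι : Type*} [Finite ι] (u : ℕ → ι → ℝ) :
    ∃ φ : ℕ → ℕ, StrictMono φ ∧ ∀ i, Tendsto (fun n => u (φ n) i) atTop atTop ∨
      Tendsto (fun n => u (φ n) i) atTop atBot ∨ ∃ c, Tendsto (fun n => u (φ n) i) atTop (𝓝 c) := by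
  obtain ⟨L, φ, hφ, hL⟩ := SeqCompactSpace.tendsto_subseq fun n i => (u n i : EReal)
  refine ⟨φ, hφ, fun i => ?_⟩
  have hi : Tendsto (fun n => (u (φ n) i : EReal)) atTop (𝓝 (L i)) := tendsto_pi_nhds.1 hL i
  generalize L i = l at hi
  induction l using EReal.rec with
  | bot => exact .inr (.inl (EReal.tendsto_coe_nhds_bot_iff.1 hi))
  | coe c => exact .inr (.inr ⟨c, EReal.tendsto_coe.1 hi⟩)
  | top => exact .inl (EReal.tendsto_coe_nhds_top_iff.1 hi)

lemma exists_surjective_fin_lt_iff {α β : Type*} [Fintype α] [LinearOrder β] (r : α → β) :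
    ∃ (P : ℕ) (τ : α → Fin P), Function.Surjective τ ∧ ∀ a b, τ a < τ b ↔ r a < r b := by
  classical
  let e := (univ.image r).orderIsoOfFin rfl
  refine ⟨_, fun a => e.symm ⟨r a, mem_image_of_mem r (mem_univ a)⟩, fun i => ?_, fun a b => ?_⟩
  · obtain ⟨a, -, ha⟩ := mem_image.1 (e i).2
    exact ⟨a, e.symm_apply_eq.2 (Subtype.ext ha)⟩
  · rw [e.symm.lt_iff_lt, Subtype.mk_lt_mk]

section Dominance

variable {α : Type*}

def Dominates (f : ℕ → α → ℝ) (a b : α) : Prop :=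
  Tendsto (fun n => f n a - f n b) atTop atTop

variable {f : ℕ → α → ℝ} {a b z : α}

lemma Dominates.of_eventually_le {c : ℝ} (hza : Dominates f z a)
    (hab : ∀ᶠ n in atTop, c ≤ f n a - f n b) : Dominates f z b :=
  (tendsto_atTop_add_right_of_le' _ c hza hab).congr fun _ => sub_add_sub_cancel ..

lemma Dominates.trans (hza : Dominates f z a) (hab : Dominates f a b) : Dominates f z b :=
  hza.of_eventually_le (hab.eventually_ge_atTop 0)

lemma not_dominates_self (f : ℕ → α → ℝ) (a : α) : ¬Dominates f a a := by
  simpa [Dominates] using not_tendsto_const_atTop (0 : ℝ) atTop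

lemma dominates_or_dominates_or_abs_le
    (h : Tendsto (fun n => f n a - f n b) atTop atTop ∨
      Tendsto (fun n => f n a - f n b) atTop atBot ∨
      ∃ c, Tendsto (fun n => f n a - f n b) atTop (𝓝 c)) :
    Dominates f a b ∨ Dominates f b a ∨ ∃ K, ∀ n, |f n a - f n b| ≤ K := by
  rcases h with h | h | ⟨c, h⟩
  · exact .inl h
  · exact .inr (.inl ((tendsto_neg_atBot_atTop.comp h).congr fun _ => neg_sub ..))
  · obtain ⟨K, hK⟩ := (Metric.isBounded_range_of_tendsto _ h).exists_norm_le
    exact .inr (.inr ⟨K, fun n => hK _ (Set.mem_range_self n)⟩)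

variable [Fintype α]

open Classical in
noncomputable def dominanceRank (f : ℕ → α → ℝ) (a : α) : ℕ :=
  #{z | Dominates f z a}

lemma Dominates.dominanceRank_lt (hab : Dominates f a b) :
    dominanceRank f a < dominanceRank f b := by
  classical
  refine card_lt_card <| (ssubset_iff_of_subset fun z hz => ?_).2 ⟨a, ?_, ?_⟩
  · simp only [mem_filter, mem_univ, true_and] at hz ⊢
    exact hz.trans hab
  · simpa using hab
  · simpa using not_dominates_self f a

lemma dominanceRank_eq_of_abs_le {K : ℝ} (hK : ∀ n, |f n a - f n b| ≤ K) :
    dominanceRank f a = dominanceRank f b := by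
  classical
  refine congrArg card (filter_congr fun z _ => ⟨fun hza => hza.of_eventually_le (c := -K) ?_,
    fun hzb => hzb.of_eventually_le (c := -K) ?_⟩)
  · exact .of_forall fun n => neg_le_of_abs_le (hK n)
  · exact .of_forall fun n => neg_le_of_abs_le (abs_sub_comm (f n a) (f n b) ▸ hK n)

theorem exists_tiers
    (hf : ∀ a b, Dominates f a b ∨ Dominates f b a ∨ ∃ K, ∀ n, |f n a - f n b| ≤ K) :
    ∃ (P : ℕ) (τ : α → Fin P), Function.Surjective τ ∧
      (∃ K, ∀ a b, τ a = τ b → ∀ n, |f n a - f n b| ≤ K) ∧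
      ∀ a b, τ a < τ b → Dominates f a b := by
  obtain ⟨P, τ, hτ, hlt⟩ := exists_surjective_fin_lt_iff (dominanceRank f)
  have hbdd : ∀ p : α × α, ∃ K, τ p.1 = τ p.2 → ∀ n, |f n p.1 - f n p.2| ≤ K := by
    rintro ⟨a, b⟩
    rcases hf a b with hab | hba | hK
    · exact ⟨0, fun h => absurd ((hlt a b).2 hab.dominanceRank_lt) h.not_lt⟩
    · exact ⟨0, fun h => absurd ((hlt b a).2 hba.dominanceRank_lt) h.not_gt⟩
    · exact hK.imp fun K hK _ => hK
  choose K hK using hbdd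
  obtain ⟨B, hB⟩ := Finite.exists_le K
  refine ⟨P, τ, hτ, ⟨B, fun a b h n => (hK (a, b) h n).trans (hB _)⟩, fun a b h => ?_⟩
  rcases hf a b with hab | hba | ⟨K, hK⟩
  · exact hab
  · exact absurd ((hlt a b).1 h) hba.dominanceRank_lt.not_gt
  · exact absurd ((hlt a b).1 h) (dominanceRank_eq_of_abs_le hK).not_lt

end Dominance

/-- Given a finite set `C` of vectors in `ℝ^N` and a sequence of points in the strictly
positive orthant, there is a subsequence along which `C` is partitioned. -/
theorem stmt_1 {N : ℕ} (C : Finset (Fin N → ℝ)) (x : ℕ → Fin N → ℝ)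
    (hx : ∀ n i, 0 < x n i) :
    ∃ φ : ℕ → ℕ, StrictMono φ ∧
      ∃ (P : ℕ) (T : Fin P → Set (Fin N → ℝ)) (M : ℝ),
        PartitionedAlong C (fun n => x (φ n)) T M := by
  let ℓ : ℕ → Fin N → ℝ := fun n i => Real.log (x n i)
  obtain ⟨φ, hφ, hgap⟩ := exists_subseq_tendsto_atTop_or_atBot_or_nhds
    fun n (p : C × C) => (p.1 : Fin N → ℝ) ⬝ᵥ ℓ n - (p.2 : Fin N → ℝ) ⬝ᵥ ℓ n
  let f : ℕ → C → ℝ := fun n a => (a : Fin N → ℝ) ⬝ᵥ ℓ (φ n)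
  obtain ⟨P, τ, hτ, ⟨K, hK⟩, hdom⟩ :=
    exists_tiers fun a b => dominates_or_dominates_or_abs_le (f := f) (hgap (a, b))
  have hsub : ∀ n (a b : C), vpow (x (φ n)) (b - a) = Real.exp (f n b - f n a) := fun n a b => by
    rw [vpow_eq_exp_dotProduct (hx _), sub_dotProduct]
  have hdiv : ∀ n (a b : C), vpow (x (φ n)) a / vpow (x (φ n)) b = Real.exp (f n a - f n b) :=
    fun n a b => by
      rw [vpow_eq_exp_dotProduct (hx _), vpow_eq_exp_dotProduct (hx _), ← Real.exp_sub]
  refine ⟨φ, hφ, P, _, Real.exp (max K 1), partitionedAlong_of_tiers τ hτ ?_ ?_ ?_⟩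
  · exact Real.one_lt_exp_iff.2 (zero_lt_one.trans_le (le_max_right K 1))
  · intro a b hab n
    have hba := (hK b a hab.symm n).trans (le_max_left K 1)
    rw [hsub, one_div, ← Real.exp_neg, Real.exp_le_exp, Real.exp_le_exp]
    exact abs_le.1 hba
  · intro a b hab
    exact (Real.tendsto_exp_atTop.comp (hdom a b hab)).congr fun n => (hdiv n a b).symm
end

section
/- Let C be a finite set of vectors in ℝ^N. Let (x_n) be a sequence of points in ℝ^N_{>0} with x_n → z as n → ∞, where z lies on the boundary of ℝ^N_{≥0}. Let U = { i ∈ {1,…,N} : z_i = 0 }. Suppose that C is partitioned along (x_n) with tiers T_1, …, T_P. Then there exists a non-negative conservation relation w ∈ ℝ^N_{≥0} that respects the pair (U, {T_i}): that is, w_i > 0 if and only if i ∈ U, and w · (y_j − y_ℓ) = 0 whenever y_j and y_ℓ lie in the same tier T_i. -/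
open Filter

/-! Put `L n = log ∘ x n`. Within a tier `|(y - y') ⬝ᵥ L n| ≤ log M`, and off `U = {z = 0}` the
coordinates of `L n` converge, so the restrictions to `U` of these differences span a subspace `V`
on which `· ⬝ᵥ L n` stays bounded. A nonzero nonnegative vector supported on `U` would instead
send `· ⬝ᵥ L n` to `-∞`, because `L n k → -∞` for `k ∈ U`. So the simplex spanned by the basis
vectors of `U` misses `V`, and separating the two (Stiemke's alternative) gives `w` positive on
`U` and orthogonal to `V`; its restriction to `U` is the required conservation relation. -/

open Topology Asymptotics

section Separation

variable {ι : Type*} [Fintype ι]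

theorem Submodule.exists_pos_on_orthogonal_of_nonneg_eq_zero (V : Submodule ℝ (ι → ℝ)) (U : Set ι)
    (hV : ∀ v ∈ V, 0 ≤ v → (∀ k ∉ U, v k = 0) → v = 0) :
    ∃ w : ι → ℝ, (∀ k ∈ U, 0 < w k) ∧ ∀ v ∈ V, w ⬝ᵥ v = 0 := by
  classical
  set e : ι → ι → ℝ := fun i j => if i = j then 1 else 0
  set K := convexHull ℝ (e '' U)
  have hK : K ⊆ stdSimplex ℝ ι ∩ {v | ∀ k ∉ U, v k = 0} := by
    refine convexHull_min ?_ ((convex_stdSimplex ℝ ι).inter fun u hu v hv a b _ _ _ k hk => ?_)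
    · rintro _ ⟨i, hi, rfl⟩
      exact ⟨ite_eq_mem_stdSimplex ℝ i, fun k hk => if_neg (ne_of_mem_of_not_mem hi hk)⟩
    · simp [hu k hk, hv k hk]
  have hKV : Disjoint K V := by
    refine Set.disjoint_left.mpr fun v hvK hvV => ?_
    obtain ⟨⟨hv0, hv1⟩, hvU⟩ := hK hvK
    simp [hV v hvV hv0 hvU] at hv1
  obtain ⟨f, s, t, hfK, hst, hfV⟩ := geometric_hahn_banach_compact_closed
    (convex_convexHull ℝ _) ((U.toFinite.image e).isCompact_convexHull ℝ)
    V.convex V.closed_of_finiteDimensional hKV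
  have ht : t < 0 := by simpa using hfV 0 V.zero_mem
  -- `f` is bounded below on the subspace `V`, hence vanishes on it
  have hf : ∀ v ∈ V, f v = 0 := by
    intro v hv
    by_contra h
    have := hfV (((t - 1) / f v) • v) (V.smul_mem _ hv)
    rw [map_smul, smul_eq_mul, div_mul_cancel₀ _ h] at this
    linarith
  refine ⟨fun i => -f (e i), fun k hk => ?_, fun v hv => ?_⟩
  · linarith [hfK (e k) (subset_convexHull ℝ _ ⟨k, hk, rfl⟩)]
  · have := LinearMap.pi_apply_eq_sum_univ f.toLinearMap v
    simp only [ContinuousLinearMap.coe_coe, hf v hv, smul_eq_mul] at this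
    simpa [dotProduct, e, mul_comm] using this.symm

end Separation

section BoundedDirections

variable {α ι : Type*} [Fintype ι] (l : Filter α) (L : α → ι → ℝ)

def boundedDirections : Submodule ℝ (ι → ℝ) where
  carrier := {v | (fun a => v ⬝ᵥ L a) =O[l] fun _ => (1 : ℝ)}
  add_mem' hu hv := by simpa only [Set.mem_ofPred_eq, add_dotProduct] using hu.add hv
  zero_mem' := by simpa only [Set.mem_ofPred_eq, zero_dotProduct] using isBigO_zero _ _
  smul_mem' c _ hv := by
    simpa only [Set.mem_ofPred_eq, smul_dotProduct, smul_eq_mul] using hv.const_mul_left c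

variable {l L}

theorem indicator_mem_boundedDirections {U : Set ι} {c : ι → ℝ}
    (hL : ∀ k ∉ U, Tendsto (fun a => L a k) l (𝓝 (c k))) {v : ι → ℝ}
    (hv : v ∈ boundedDirections l L) : U.indicator v ∈ boundedDirections l L := by
  have hcompl : Tendsto (fun a => Uᶜ.indicator v ⬝ᵥ L a) l (𝓝 (Uᶜ.indicator v ⬝ᵥ c)) := by
    refine tendsto_finsetSum _ fun k _ => ?_
    by_cases hk : k ∈ U
    · simpa [hk] using tendsto_const_nhds
    · exact (hL k hk).const_mul _
  rw [← sub_sub_cancel v (U.indicator v), ← Set.indicator_compl]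
  exact sub_mem hv (hcompl.isBigO_one (F := ℝ))

theorem eq_zero_of_nonneg_mem_boundedDirections [l.NeBot] {U : Set ι}
    (hL : ∀ k ∈ U, Tendsto (fun a => L a k) l atBot) {v : ι → ℝ}
    (hv : v ∈ boundedDirections l L) (hv0 : 0 ≤ v) (hvU : ∀ k ∉ U, v k = 0) : v = 0 := by
  classical
  by_contra hne
  obtain ⟨k, hk⟩ := Function.ne_iff.mp hne
  have hkU : k ∈ U := by_contra fun h => hk (hvU k h)
  have hvk : 0 < v k := (hv0 k).lt_of_ne' hk
  have hLU : ∀ᶠ a in l, ∀ j ∈ U, L a j ≤ 0 := by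
    refine eventually_all.mpr fun j => ?_
    by_cases hj : j ∈ U
    · filter_upwards [(hL j hj).eventually_le_atBot 0] with a ha _ using ha
    · exact .of_forall fun _ h => absurd h hj
  have hle : ∀ᶠ a in l, v ⬝ᵥ L a ≤ v k * L a k := by
    filter_upwards [hLU] with a ha
    have hrest : ∑ j ∈ Finset.univ.erase k, v j * L a j ≤ 0 := by
      refine Finset.sum_nonpos fun j _ => ?_
      by_cases hj : j ∈ U
      · exact mul_nonpos_of_nonneg_of_nonpos (hv0 j) (ha j hj)
      · simp [hvU j hj]
    rw [dotProduct, ← Finset.add_sum_erase _ _ (Finset.mem_univ k)]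
    linarith
  have hbot : Tendsto (fun a => v ⬝ᵥ L a) l atBot :=
    tendsto_atBot_mono' l hle ((hL k hkU).const_mul_atBot hvk)
  exact not_isBoundedUnder_of_tendsto_atTop (tendsto_abs_atBot_atTop.comp hbot)
    (isBigO_one_iff ℝ |>.mp hv)

end BoundedDirections

theorem log_vpow {N : ℕ} {x : Fin N → ℝ} (hx : ∀ i, 0 < x i) (v : Fin N → ℝ) :
    Real.log (vpow x v) = v ⬝ᵥ fun i => Real.log (x i) := by
  rw [vpow, Real.log_prod fun i _ => (Real.rpow_pos_of_pos (hx i) _).ne']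
  exact Finset.sum_congr rfl fun i _ => Real.log_rpow (hx i) _

theorem abs_dotProduct_log_le_log {N : ℕ} {x : Fin N → ℝ} (hx : ∀ i, 0 < x i) {v : Fin N → ℝ}
    {M : ℝ} (h : 1 / M ≤ vpow x v ∧ vpow x v ≤ M) :
    |v ⬝ᵥ fun i => Real.log (x i)| ≤ Real.log M := by
  have hpos : 0 < vpow x v := Finset.prod_pos fun i _ => Real.rpow_pos_of_pos (hx i) _
  have hM : 0 < M := hpos.trans_le h.2
  rw [← log_vpow hx, abs_le, ← Real.log_inv, ← one_div]
  exact ⟨Real.log_le_log (by positivity) h.1, Real.log_le_log hpos h.2⟩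

theorem stmt_2_general {N P : ℕ} (C : Finset (Fin N → ℝ)) (x : ℕ → Fin N → ℝ)
    (hx : ∀ n i, 0 < x n i)
    (z : Fin N → ℝ)
    (hconv : Tendsto x atTop (nhds z))
    (T : Fin P → Set (Fin N → ℝ)) (M : ℝ)
    (hpart : PartitionedAlong C x T M) :
    ∃ w : Fin N → ℝ, (∀ i, 0 ≤ w i) ∧ (∀ i, 0 < w i ↔ z i = 0) ∧
      ∀ i : Fin P, ∀ yj ∈ T i, ∀ yl ∈ T i, (∑ k, w k * (yj k - yl k)) = 0 := by
  obtain ⟨-, -, -, -, hsame, -⟩ := hpart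
  set U : Set (Fin N) := {k | z k = 0}
  set L : ℕ → Fin N → ℝ := fun n k => Real.log (x n k)
  have hxk : ∀ k, Tendsto (fun n => x n k) atTop (𝓝 (z k)) := tendsto_pi_nhds.mp hconv
  have hLU : ∀ k ∈ U, Tendsto (fun n => L n k) atTop atBot := fun k hk =>
    Real.tendsto_log_nhdsGT_zero.comp
      (tendsto_nhdsWithin_iff.mpr ⟨hk ▸ hxk k, .of_forall (hx · k)⟩)
  have hLUc : ∀ k ∉ U, Tendsto (fun n => L n k) atTop (𝓝 (Real.log (z k))) := fun k hk =>
    (Real.continuousAt_log hk).tendsto.comp (hxk k)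
  set V := Submodule.span ℝ {d | ∃ p, ∃ y ∈ T p, ∃ y' ∈ T p, d = U.indicator (y - y')}
  have hV : V ≤ boundedDirections atTop L := by
    refine Submodule.span_le.mpr ?_
    rintro _ ⟨p, y, hy, y', hy', rfl⟩
    refine indicator_mem_boundedDirections hLUc (IsBigO.of_bound (Real.log M) ?_)
    exact .of_forall fun n => by
      simpa using abs_dotProduct_log_le_log (hx n) (hsame p y' hy' y hy n)
  obtain ⟨w, hwU, hwV⟩ := V.exists_pos_on_orthogonal_of_nonneg_eq_zero U
    fun v hv => eq_zero_of_nonneg_mem_boundedDirections hLU (hV hv)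
  refine ⟨U.indicator w, fun k => ?_, fun k => ?_, fun p y hy y' hy' => ?_⟩
  · rw [Set.indicator_apply]
    split_ifs with hk
    exacts [(hwU k hk).le, le_rfl]
  · rw [Set.indicator_apply]
    split_ifs with hk
    exacts [iff_of_true (hwU k hk) hk, iff_of_false (lt_irrefl 0) hk]
  · rw [← hwV _ (Submodule.subset_span ⟨p, y, hy, y', hy', rfl⟩)]
    refine Finset.sum_congr rfl fun k _ => ?_
    by_cases hk : k ∈ U <;> simp [hk]

/-- If a sequence of strictly positive points converges to a boundary point `z` of the
nonnegative orthant, and the finite set of vectors `C` is partitioned along the sequence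
with tiers `T`, then there is a nonnegative conservation relation `w` that respects the
pair `(U, {T i})`, where `U = {i : z i = 0}`: the support of `w` is exactly `U`, and
`w · (y_j − y_ℓ) = 0` whenever `y_j` and `y_ℓ` lie in the same tier. -/
theorem stmt_2 {N P : ℕ} (C : Finset (Fin N → ℝ)) (x : ℕ → Fin N → ℝ)
    (hx : ∀ n i, 0 < x n i)
    (z : Fin N → ℝ) (hz : ∀ i, 0 ≤ z i) (hzb : ∃ i, z i = 0)
    (hconv : Tendsto x atTop (nhds z))
    (T : Fin P → Set (Fin N → ℝ)) (M : ℝ)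
    (hpart : PartitionedAlong C x T M) :
    ∃ w : Fin N → ℝ, (∀ i, 0 ≤ w i) ∧ (∀ i, 0 < w i ↔ z i = 0) ∧
      ∀ i : Fin P, ∀ yj ∈ T i, ∀ yl ∈ T i, (∑ k, w k * (yj k - yl k)) = 0 :=
  stmt_2_general C x hx z hconv T M hpart
end

section
/- Suppose the chemical reaction network (C, R) on N species is weakly reversible, and let U ⊆ {1,…,N} be nonempty. Then the reduced reaction network (C_U, R_U) associated with U is weakly reversible. -/
open Filter

/-- A chemical reaction network on `N` species: a finite set `C ⊆ ℤ^N_{≥0}` of complexes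
and a finite set `R` of reactions `y → y'` with `y ≠ y'`, both endpoints complexes,
such that every complex takes part in at least one reaction. -/
def IsNetwork {N : ℕ} (C : Finset (Fin N → ℕ)) (R : Finset ((Fin N → ℕ) × (Fin N → ℕ))) : Prop :=
  (∀ r ∈ R, r.1 ∈ C ∧ r.2 ∈ C ∧ r.1 ≠ r.2) ∧ (∀ y ∈ C, ∃ r ∈ R, r.1 = y ∨ r.2 = y)

/-- Directed edge of the reaction diagram. -/
def dirStep {N : ℕ} (R : Finset ((Fin N → ℕ) × (Fin N → ℕ))) (a b : Fin N → ℕ) : Prop :=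
  (a, b) ∈ R

/-- Undirected edge of the reaction diagram. -/
def symStep {N : ℕ} (R : Finset ((Fin N → ℕ) × (Fin N → ℕ))) (a b : Fin N → ℕ) : Prop :=
  (a, b) ∈ R ∨ (b, a) ∈ R

/-- A network is weakly reversible when each linkage class (connected component of the
reaction diagram, ignoring directions) is strongly connected as a directed graph:
whenever `b` is reachable from `a` ignoring directions, it is reachable along
directed reactions. -/
def WeaklyReversible {N : ℕ} (R : Finset ((Fin N → ℕ) × (Fin N → ℕ))) : Prop :=
  ∀ a b, Relation.ReflTransGen (symStep R) a b → Relation.ReflTransGen (dirStep R) a b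

/-- Projection of a complex onto the coordinates in `U` (coordinates outside `U`
are deleted, here encoded by setting them to zero). -/
def projU {N : ℕ} (U : Finset (Fin N)) (y : Fin N → ℕ) : Fin N → ℕ :=
  fun i => if i ∈ U then y i else 0

/-- Reactions of the reduced network associated with `U`: projections of the original
reactions whose projected source and product differ. -/
noncomputable def reducedR {N : ℕ} (U : Finset (Fin N))
    (R : Finset ((Fin N → ℕ) × (Fin N → ℕ))) : Finset ((Fin N → ℕ) × (Fin N → ℕ)) :=
  (R.image fun r => (projU U r.1, projU U r.2)).filter fun r => r.1 ≠ r.2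


lemma proj_path {N : ℕ} (U : Finset (Fin N)) (R : Finset ((Fin N → ℕ) × (Fin N → ℕ)))
    {x y : Fin N → ℕ} (h : Relation.ReflTransGen (dirStep R) x y) :
    Relation.ReflTransGen (dirStep (reducedR U R)) (projU U x) (projU U y) := by
  induction h with
  | refl => exact Relation.ReflTransGen.refl
  | tail _ hstep ih =>
    rename_i p q _
    by_cases hpq : projU U p = projU U q
    · rwa [← hpq]
    · refine ih.tail ?_
      simp only [dirStep, reducedR, Finset.mem_filter, Finset.mem_image]
      exact ⟨⟨(p, q), hstep, rfl⟩, hpq⟩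

/-- If a chemical reaction network is weakly reversible, then so is the reduced
reaction network associated with any nonempty set of species `U`. -/
theorem stmt_4 {N : ℕ} (C : Finset (Fin N → ℕ)) (R : Finset ((Fin N → ℕ) × (Fin N → ℕ)))
    (hnet : IsNetwork C R) (hwr : WeaklyReversible R)
    (U : Finset (Fin N)) (hU : U.Nonempty) :
    WeaklyReversible (reducedR U R) := by
  intro a b hab
  induction hab with
  | refl => exact Relation.ReflTransGen.refl
  | tail _ hstep ih =>
    rename_i c d _
    refine ih.trans ?_
    rcases hstep with h | h
    · exact Relation.ReflTransGen.single h
    · simp only [reducedR, Finset.mem_filter, Finset.mem_image] at h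
      obtain ⟨⟨⟨x, y⟩, hxy, heq⟩, _⟩ := h
      obtain ⟨h1, h2⟩ := Prod.mk.injEq _ _ _ _ ▸ heq
      have : Relation.ReflTransGen (dirStep R) y x :=
        hwr y x (Relation.ReflTransGen.single (Or.inr hxy))
      have := proj_path U R this
      rwa [h1, h2] at this
end

section
/- Let (C, R) be a chemical reaction network on N species and let x : [0,∞) → ℝ^N_{>0} be a trajectory of the associated non-autonomous mass-action system with bounded kinetics. Suppose that for every x̄ ∈ ℝ^N_{>0} there exists T = T_{x̄} > 0 such that (d/dt) V_{x̄}(x(t)) < 0 for all t > T. Then the ω-limit set of the trajectory x(·) is a single point. -/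
open Filter

/-- The mass-action monomial `x^y = ∏ i, (x i)^(y i)` (with the convention `0^0 = 1`). -/
noncomputable def monom {N : ℕ} (x : Fin N → ℝ) (y : Fin N → ℕ) : ℝ := ∏ i, x i ^ y i

/-- A complex, viewed as a real vector. -/
def cv {N : ℕ} (y : Fin N → ℕ) : Fin N → ℝ := fun i => (y i : ℝ)

/-- The standard Lyapunov function of chemical reaction network theory,
`V_{x̄}(x) = ∑ i, (x i (ln (x i) − ln (x̄ i) − 1) + x̄ i)`, extended to the boundary by
the convention `0 · ln 0 = 0` (note `Real.log 0 = 0`). -/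
noncomputable def lyap {N : ℕ} (xb x : Fin N → ℝ) : ℝ :=
  ∑ i, (x i * (Real.log (x i) - Real.log (xb i) - 1) + xb i)

/-- The ω-limit set of the trajectory `x`. -/
def omegaSet {N : ℕ} (x : ℝ → Fin N → ℝ) : Set (Fin N → ℝ) :=
  {z | ∃ tn : ℕ → ℝ, Tendsto tn atTop atTop ∧ Tendsto (fun n => x (tn n)) atTop (nhds z)}

/-!
Each `V_{x̄}` eventually decreases along the trajectory and is bounded below by `0`, so it
converges; by continuity it is constant on the ω-limit set. Since
`V_{x̄}(z) = V_𝟙(z) - ∑ i, z i ln x̄ i + ∑ i, (x̄ i - 1)`, comparing `x̄ = 𝟙` with the vector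
that is `e` in coordinate `j` and `1` elsewhere shows that all points of the ω-limit set share
their `j`-th coordinate. Finally `z i ≤ V_𝟙(z) + e` for positive `z`, so the trajectory stays
bounded and its ω-limit set is nonempty.
-/

open Real Set Topology

lemma lyap_term_nonneg {a b : ℝ} (ha : 0 < a) (hb : 0 < b) :
    0 ≤ a * (log a - log b - 1) + b := by
  have h := mul_le_mul_of_nonneg_left (log_le_sub_one_of_pos (div_pos hb ha)) ha.le
  rw [log_div hb.ne' ha.ne', mul_sub a (b / a), mul_div_cancel₀ b ha.ne'] at h
  linarith

lemma lyap_nonneg {N : ℕ} {xb u : Fin N → ℝ} (hxb : ∀ i, 0 < xb i) (hu : ∀ i, 0 < u i) :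
    0 ≤ lyap xb u :=
  Finset.sum_nonneg fun i _ => lyap_term_nonneg (hu i) (hxb i)

lemma continuous_lyap {N : ℕ} (xb : Fin N → ℝ) : Continuous (lyap xb) := by
  have h : lyap xb = fun u => ∑ i, (u i * log (u i) - u i * (log (xb i) + 1) + xb i) := by
    funext u
    simp only [lyap]
    congr 1 with i
    ring
  rw [h]
  fun_prop

lemma lyap_eq_lyap_one {N : ℕ} (xb u : Fin N → ℝ) :
    lyap xb u = lyap 1 u - ∑ i, u i * log (xb i) + ∑ i, (xb i - 1) := by
  simp only [lyap, Pi.one_apply, log_one]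
  rw [← Finset.sum_sub_distrib, ← Finset.sum_add_distrib]
  congr 1 with i
  ring

lemma eq_of_forall_lyap_eq {N : ℕ} {u v : Fin N → ℝ}
    (h : ∀ xb : Fin N → ℝ, (∀ i, 0 < xb i) → lyap xb u = lyap xb v) : u = v := by
  funext j
  have hone := h 1 fun _ => one_pos
  have hj := h (Function.update 1 j (exp 1)) fun i => by
    rcases eq_or_ne i j with rfl | hij
    · simpa using exp_pos 1
    · simp [hij]
  have hlog : ∀ w : Fin N → ℝ,
      ∑ i, w i * log (Function.update (1 : Fin N → ℝ) j (exp 1) i) = w j := by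
    intro w
    simp [Function.update_apply, apply_ite log]
  rw [lyap_eq_lyap_one _ u, lyap_eq_lyap_one _ v, hlog, hlog] at hj
  linarith

lemma le_lyap_one_add_exp_one {N : ℕ} {u : Fin N → ℝ} (hu : ∀ i, 0 < u i) (i : Fin N) :
    u i ≤ lyap 1 u + exp 1 := by
  have hi : u i * (log (u i) - log 1 - 1) + 1 ≤ lyap 1 u :=
    Finset.single_le_sum (f := fun k => u k * (log (u k) - log ((1 : Fin N → ℝ) k) - 1)
      + (1 : Fin N → ℝ) k) (fun k _ => lyap_term_nonneg (hu k) one_pos) (Finset.mem_univ i)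
  -- the case `b = e` of `lyap_term_nonneg` says `a (ln a - 2) ≥ -e`
  have he := lyap_term_nonneg (hu i) (exp_pos 1)
  rw [log_exp] at he
  rw [log_one] at hi
  linarith

lemma norm_le_lyap_one_add_exp_one {N : ℕ} {u : Fin N → ℝ} (hu : ∀ i, 0 < u i) :
    ‖u‖ ≤ lyap 1 u + exp 1 := by
  have h0 : 0 ≤ lyap 1 u := lyap_nonneg (fun _ => one_pos) hu
  refine (pi_norm_le_iff_of_nonneg (by positivity)).2 fun i => ?_
  rw [norm_of_nonneg (hu i).le]
  exact le_lyap_one_add_exp_one hu i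

lemma strictAntiOn_Ioi_of_deriv_neg {f : ℝ → ℝ} {T : ℝ} (hf : ∀ t > T, deriv f t < 0) :
    StrictAntiOn f (Ioi T) :=
  strictAntiOn_of_deriv_neg (convex_Ioi T)
    (fun t ht => (differentiableAt_of_deriv_ne_zero (hf t ht).ne).continuousAt.continuousWithinAt)
    (fun t ht => hf t (by rwa [interior_Ioi] at ht))

lemma exists_tendsto_of_antitoneOn_Ioi {f : ℝ → ℝ} {T : ℝ} (hf : AntitoneOn f (Ioi T))
    (hbdd : ∀ t > T, 0 ≤ f t) : ∃ ℓ, Tendsto f atTop (𝓝 ℓ) := by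
  have hmem : ∀ t, max t (T + 1) ∈ Ioi T := fun t =>
    (lt_add_one T).trans_le (le_max_right _ _)
  have hg : Antitone fun t => f (max t (T + 1)) := fun s t hst =>
    hf (hmem s) (hmem t) (max_le_max hst le_rfl)
  refine ⟨_, (tendsto_atTop_ciInf hg ⟨0, ?_⟩).congr' ?_⟩
  · rintro _ ⟨t, rfl⟩
    exact hbdd _ (hmem t)
  · filter_upwards [eventually_ge_atTop (T + 1)] with t ht
    rw [max_eq_left ht]

lemma eq_of_mem_omegaSet {N : ℕ} {x : ℝ → Fin N → ℝ} {g : (Fin N → ℝ) → ℝ} {ℓ : ℝ}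
    (hg : Continuous g) (hℓ : Tendsto (fun t => g (x t)) atTop (𝓝 ℓ)) {z : Fin N → ℝ}
    (hz : z ∈ omegaSet x) : g z = ℓ := by
  obtain ⟨tn, htn, hconv⟩ := hz
  exact tendsto_nhds_unique ((hg.tendsto z).comp hconv) (hℓ.comp htn)

lemma omegaSet_nonempty_of_eventually_norm_le {N : ℕ} {x : ℝ → Fin N → ℝ} {K : ℝ}
    (hK : ∀ᶠ t in atTop, ‖x t‖ ≤ K) : (omegaSet x).Nonempty := by
  obtain ⟨T, hT⟩ := eventually_atTop.1 hK
  have hmem : ∀ n : ℕ, x (T + n) ∈ Metric.closedBall (0 : Fin N → ℝ) K := fun n => by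
    rw [mem_closedBall_zero_iff]
    exact hT _ (le_add_of_nonneg_right n.cast_nonneg)
  obtain ⟨z, -, φ, hφ, hconv⟩ := tendsto_subseq_of_bounded Metric.isBounded_closedBall hmem
  exact ⟨z, fun n => T + φ n,
    tendsto_atTop_add_const_left _ _ (tendsto_natCast_atTop_atTop.comp hφ.tendsto_atTop),
    hconv⟩

lemma exists_tendsto_lyap {N : ℕ} {x : ℝ → Fin N → ℝ} (hpos : ∀ t : ℝ, 0 ≤ t → ∀ i, 0 < x t i)
    {xb : Fin N → ℝ} (hxb : ∀ i, 0 < xb i) {T : ℝ} (hT : 0 < T)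
    (hd : ∀ t > T, deriv (fun s => lyap xb (x s)) t < 0) :
    ∃ ℓ, Tendsto (fun t => lyap xb (x t)) atTop (𝓝 ℓ) :=
  exists_tendsto_of_antitoneOn_Ioi (strictAntiOn_Ioi_of_deriv_neg hd).antitoneOn
    fun t ht => lyap_nonneg hxb (hpos t (hT.trans ht).le)

theorem stmt_7_general {N : ℕ}
    (x : ℝ → Fin N → ℝ)
    (hpos : ∀ t : ℝ, 0 ≤ t → ∀ i, 0 < x t i)
    (hV : ∀ xb : Fin N → ℝ, (∀ i, 0 < xb i) →
      ∃ T : ℝ, 0 < T ∧ ∀ t > T, deriv (fun s => lyap xb (x s)) t < 0) :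
    ∃ z : Fin N → ℝ, omegaSet x = {z} := by
  have hlim : ∀ xb : Fin N → ℝ, (∀ i, 0 < xb i) →
      ∃ ℓ, Tendsto (fun t => lyap xb (x t)) atTop (𝓝 ℓ) := fun xb hxb => by
    obtain ⟨T, hT, hd⟩ := hV xb hxb
    exact exists_tendsto_lyap hpos hxb hT hd
  have hsub : (omegaSet x).Subsingleton := fun z hz w hw =>
    eq_of_forall_lyap_eq fun xb hxb => by
      obtain ⟨ℓ, hℓ⟩ := hlim xb hxb
      rw [eq_of_mem_omegaSet (continuous_lyap xb) hℓ hz,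
        eq_of_mem_omegaSet (continuous_lyap xb) hℓ hw]
  obtain ⟨ℓ, hℓ⟩ := hlim 1 fun _ => one_pos
  have hbdd : ∀ᶠ t in atTop, ‖x t‖ ≤ ℓ + 1 + exp 1 := by
    filter_upwards [hℓ.eventually (gt_mem_nhds (lt_add_one ℓ)), eventually_ge_atTop 0]
      with t hlt ht
    linarith [norm_le_lyap_one_add_exp_one (hpos t ht)]
  exact exists_eq_singleton_iff_nonempty_subsingleton.2
    ⟨omegaSet_nonempty_of_eventually_norm_le hbdd, hsub⟩

/-- If along a trajectory of a non-autonomous mass-action system with bounded kinetics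
every Lyapunov function `V_{x̄}`, `x̄ ∈ ℝ^N_{>0}`, eventually strictly decreases, then the
ω-limit set of the trajectory is a single point. -/
theorem stmt_7 {N : ℕ} (hN : 0 < N)
    (C : Finset (Fin N → ℕ)) (R : Finset ((Fin N → ℕ) × (Fin N → ℕ)))
    (hnet : IsNetwork C R)
    (κ : ((Fin N → ℕ) × (Fin N → ℕ)) → ℝ → ℝ) (η : ℝ) (hη : 0 < η)
    (hκ : ∀ r ∈ R, ∀ t : ℝ, 0 ≤ t → η < κ r t ∧ κ r t < 1 / η)
    (x : ℝ → Fin N → ℝ)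
    (hpos : ∀ t : ℝ, 0 ≤ t → ∀ i, 0 < x t i)
    (hODE : ∀ t : ℝ, 0 ≤ t →
      HasDerivAt x (∑ r ∈ R, (κ r t * monom (x t) r.1) • (cv r.2 - cv r.1)) t)
    (hV : ∀ xb : Fin N → ℝ, (∀ i, 0 < xb i) →
      ∃ T : ℝ, 0 < T ∧ ∀ t > T, deriv (fun s => lyap xb (x s)) t < 0) :
    ∃ z : Fin N → ℝ, omegaSet x = {z} :=
  stmt_7_general x hpos hV
end

section
/- Let (C, R) be a weakly reversible chemical reaction network on N species whose reaction diagram has a single linkage class, and let x : [0,∞) → ℝ^N_{>0} be a trajectory of the associated non-autonomous mass-action system with bounded kinetics, with x(0) = x_0 ∈ ℝ^N_{>0}. Assume (1) x(t) is bounded in t, and (2) the ω-limit set of x(·) is either completely contained in the boundary ∂ℝ^N_{≥0} or completely contained in the open orthant ℝ^N_{>0}. Then the ω-limit set of x(·) does not intersect ∂ℝ^N_{≥0}, and the trajectory is persistent. -/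
/-!
Write `W_Λ(u) = ∑_{i ∈ Λ} uᵢ (log uᵢ - 1)` for the Horn–Jackson free energy of a set `Λ` of
species. Along the flow it changes at rate `∑_r κ_r x^{y_r} log (x_Λ^{y_r'} / x_Λ^{y_r})`, where
`x_Λ^y` is the part of the monomial `x^y` carried by `Λ`. The key estimate is that this rate is
eventually at most `-∑_{y ∈ C} x_Λ^y` whenever every ω-limit point vanishes somewhere on `Λ` and
is positive off `Λ`. Along a sequence of times, sort the complexes into tiers by the size of
`x_Λ^y`. If all complexes stay in the top tier, a limit direction of `-log x_Λ` is a nonnegative,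
nonzero vector orthogonal to every reaction vector: a positive conservation law, which cannot
vanish at the boundary limit. Otherwise strong connectivity of the reaction graph provides a
reaction leaving the top tier, and its term drives the rate to `-∞` relative to `∑_y x_Λ^y`.

Now suppose every ω-limit point lies on the boundary. With `Λ` all species, `W` is eventually
nonincreasing and, since `ẋᵢ ≥ -Kᵢ ∑_y x^y ≥ Kᵢ Ẇ`, each `xᵢ - Kᵢ W` is nondecreasing, so the
bounded trajectory converges. With `Λ` the zero set of the limit, `W_Λ` is eventually
nonincreasing and tends to `0`, yet it is negative near the limit. Hence the ω-limit set lies in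
the open orthant, and compactness gives persistence.
-/

open Filter

open Topology Finset

lemma monotoneOn_Ici_of_hasDerivAt {f f' : ℝ → ℝ} {T : ℝ}
    (hf : ∀ t, T ≤ t → HasDerivAt f (f' t) t) (hf' : ∀ t, T ≤ t → 0 ≤ f' t) :
    MonotoneOn f (Set.Ici T) :=
  monotoneOn_of_hasDerivWithinAt_nonneg (convex_Ici T)
    (fun t ht => (hf t ht).continuousAt.continuousWithinAt)
    (fun t ht => (hf t (interior_subset ht)).hasDerivWithinAt)
    (fun t ht => hf' t (interior_subset ht))

lemma exists_tendsto_of_hasDerivAt_nonneg {f f' : ℝ → ℝ} {T M : ℝ}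
    (hf : ∀ t, T ≤ t → HasDerivAt f (f' t) t) (hf' : ∀ t, T ≤ t → 0 ≤ f' t)
    (hM : ∀ t, T ≤ t → f t ≤ M) : ∃ L, Tendsto f atTop (𝓝 L) := by
  have hmono := monotoneOn_Ici_of_hasDerivAt hf hf'
  have hg : Monotone fun t => f (max t T) := fun s t hst =>
    hmono (le_max_right s T) (le_max_right t T) (max_le_max hst le_rfl)
  have hbdd : BddAbove (Set.range fun t => f (max t T)) :=
    ⟨M, by rintro _ ⟨t, rfl⟩; exact hM _ (le_max_right t T)⟩
  refine ⟨_, (tendsto_atTop_ciSup hg hbdd).congr' ?_⟩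
  filter_upwards [eventually_ge_atTop T] with t ht
  rw [max_eq_left ht]

lemma mul_log_sub_log_le {a b : ℝ} (ha : 0 < a) (hb : 0 < b) :
    a * (Real.log b - Real.log a) ≤ b - a := by
  have h := Real.log_le_sub_one_of_pos (div_pos hb ha)
  rw [Real.log_div hb.ne' ha.ne'] at h
  calc a * (Real.log b - Real.log a) ≤ a * (b / a - 1) := mul_le_mul_of_nonneg_left h ha.le
    _ = b - a := by field_simp

lemma exists_subseq_bddBelow_or_tendsto_atBot {ι : Type*} [DecidableEq ι] (s : Finset ι)
    (f : ι → ℕ → ℝ) :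
    ∃ φ : ℕ → ℕ, StrictMono φ ∧ ∀ i ∈ s,
      (∃ M, ∀ n, M ≤ f i (φ n)) ∨ Tendsto (fun n => f i (φ n)) atTop atBot := by
  induction s using Finset.induction with
  | empty => exact ⟨id, strictMono_id, by simp⟩
  | insert a s _ ih =>
    obtain ⟨φ, hφ, hs⟩ := ih
    have hinherit : ∀ ψ : ℕ → ℕ, StrictMono ψ → ∀ i ∈ s,
        (∃ M, ∀ n, M ≤ f i (φ (ψ n))) ∨ Tendsto (fun n => f i (φ (ψ n))) atTop atBot := by
      intro ψ hψ i hi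
      refine (hs i hi).imp (fun ⟨M, hM⟩ => ⟨M, fun n => hM (ψ n)⟩) fun h => ?_
      exact h.comp hψ.tendsto_atTop
    by_cases hfreq : ∃ M, ∃ᶠ n in atTop, M ≤ f a (φ n)
    · obtain ⟨M, hM⟩ := hfreq
      obtain ⟨ψ, hψ, hMψ⟩ := extraction_of_frequently_atTop hM
      refine ⟨φ ∘ ψ, hφ.comp hψ, fun i hi => ?_⟩
      rcases mem_insert.1 hi with rfl | hi
      · exact Or.inl ⟨M, hMψ⟩
      · exact hinherit ψ hψ i hi
    · push Not at hfreq
      refine ⟨φ, hφ, fun i hi => ?_⟩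
      rcases mem_insert.1 hi with rfl | hi
      · exact Or.inr (tendsto_atBot.2 fun M => (hfreq M).mono fun n hn => hn.le)
      · exact hinherit id strictMono_id i hi

lemma exists_frequently_forall_le {ι : Type*} (s : Finset ι) (hs : s.Nonempty)
    (f : ι → ℕ → ℝ) : ∃ i ∈ s, ∃ᶠ n in atTop, ∀ j ∈ s, f j n ≤ f i n := by
  by_contra! h
  obtain ⟨n, hn⟩ := ((eventually_all_finset s).2 h).exists
  obtain ⟨i, hi, himax⟩ := s.exists_max_image (f · n) hs
  obtain ⟨j, hj, hlt⟩ := hn i hi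
  exact (himax j hj).not_gt hlt

lemma Relation.ReflTransGen.exists_boundary_step {α : Type*} {r : α → α → Prop} (P : α → Prop)
    {a b : α} (h : Relation.ReflTransGen r a b) (ha : P a) (hb : ¬ P b) :
    ∃ u v, r u v ∧ P u ∧ ¬ P v := by
  induction h with
  | refl => exact absurd ha hb
  | @tail c d _ hcd ih =>
    by_cases hc : P c
    · exact ⟨c, d, hcd, hc, hb⟩
    · exact ih hc

lemma exists_recession_direction {ι : Type*} [Fintype ι] (v : ℕ → ι → ℝ) {M : ℝ}
    (hM : ∀ n i, M ≤ v n i) {i₀ : ι} (hi₀ : Tendsto (fun n => v n i₀) atTop atTop) :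
    ∃ w : ι → ℝ, 0 ≤ w ∧ w ≠ 0 ∧
      (∀ d : ι → ℝ, (∃ K, ∀ n, |d ⬝ᵥ v n| ≤ K) → d ⬝ᵥ w = 0) ∧
      ∃ φ : ℕ → ℕ, StrictMono φ ∧ ∀ i, 0 < w i → Tendsto (fun n => v (φ n) i) atTop atTop := by
  set c : ℕ → ℝ := fun n => ‖v n‖ + 1
  have hc : ∀ n, 0 < c n := fun n => by positivity
  have hnorm : Tendsto (fun n => ‖v n‖) atTop atTop :=
    tendsto_atTop_mono (fun n => (le_abs_self _).trans (norm_le_pi_norm (v n) i₀)) hi₀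
  have hcTop : Tendsto c atTop atTop := tendsto_atTop_add_const_right _ 1 hnorm
  have hball : ∀ n, (c n)⁻¹ • v n ∈ Metric.closedBall (0 : ι → ℝ) 1 := fun n => by
    rw [mem_closedBall_zero_iff, norm_smul, norm_inv, Real.norm_of_nonneg (hc n).le,
      inv_mul_le_one₀ (hc n)]
    exact (lt_add_one _).le
  obtain ⟨w, -, φ, hφ, hw⟩ := (isCompact_closedBall (0 : ι → ℝ) 1).tendsto_subseq hball
  have hcφ : Tendsto (fun n => (c (φ n))⁻¹) atTop (𝓝 0) :=
    tendsto_inv_atTop_zero.comp (hcTop.comp hφ.tendsto_atTop)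
  have hwi : ∀ i, Tendsto (fun n => (c (φ n))⁻¹ * v (φ n) i) atTop (𝓝 (w i)) :=
    fun i => tendsto_pi_nhds.1 hw i
  refine ⟨w, fun i => ?_, fun hw0 => ?_, fun d ⟨K, hK⟩ => ?_, φ, hφ, fun i hi => ?_⟩
  · refine le_of_tendsto_of_tendsto' (by simpa using hcφ.const_mul M) (hwi i) fun n => ?_
    rw [mul_comm]
    exact mul_le_mul_of_nonneg_left (hM _ i) (inv_nonneg.2 (hc _).le)
  · have hone : Tendsto (fun n => 1 - (c (φ n))⁻¹) atTop (𝓝 1) := by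
      simpa using tendsto_const_nhds.sub hcφ
    have hnorm_eq : ∀ n, 1 - (c (φ n))⁻¹ = ‖(c (φ n))⁻¹ • v (φ n)‖ := fun n => by
      rw [norm_smul, norm_inv, Real.norm_of_nonneg (hc _).le]
      field_simp [(hc (φ n)).ne']
      ring
    have := tendsto_nhds_unique hw.norm (hone.congr hnorm_eq)
    simp [hw0] at this
  · have hdw := ((continuous_const (y := d)).dotProduct continuous_id |>.tendsto w).comp hw
    refine tendsto_nhds_unique hdw (squeeze_zero_norm (a := fun n => K * (c (φ n))⁻¹)
      (fun n => ?_) (by simpa using hcφ.const_mul K))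
    simp only [Function.comp_apply, id, dotProduct_smul, smul_eq_mul, norm_mul, norm_inv,
      Real.norm_of_nonneg (hc _).le, Real.norm_eq_abs]
    rw [mul_comm]
    exact mul_le_mul_of_nonneg_right (hK _) (inv_nonneg.2 (hc _).le)
  · have h := (hcTop.comp hφ.tendsto_atTop).atTop_mul_pos hi (hwi i)
    refine h.congr fun n => ?_
    simp only [Function.comp_apply]
    rw [← mul_assoc, mul_inv_cancel₀ (hc _).ne', one_mul]

noncomputable def partialMonom {N : ℕ} (Λ : Finset (Fin N)) (u : Fin N → ℝ) (y : Fin N → ℕ) : ℝ :=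
  ∏ i ∈ Λ, u i ^ y i

noncomputable def monomialSum {N : ℕ} (C : Finset (Fin N → ℕ)) (Λ : Finset (Fin N))
    (u : Fin N → ℝ) : ℝ :=
  ∑ y ∈ C, partialMonom Λ u y

noncomputable def restrictedLog {N : ℕ} (Λ : Finset (Fin N)) (u : Fin N → ℝ) : Fin N → ℝ :=
  fun i => if i ∈ Λ then Real.log (u i) else 0

noncomputable def massActionField {N : ℕ} (R : Finset ((Fin N → ℕ) × (Fin N → ℕ)))
    (κ : ((Fin N → ℕ) × (Fin N → ℕ)) → ℝ → ℝ) (t : ℝ) (u : Fin N → ℝ) : Fin N → ℝ :=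
  ∑ r ∈ R, (κ r t * monom u r.1) • (cv r.2 - cv r.1)

noncomputable def freeEnergy {N : ℕ} (Λ : Finset (Fin N)) (u : Fin N → ℝ) : ℝ :=
  ∑ i ∈ Λ, (u i * Real.log (u i) - u i)

noncomputable def freeEnergyRate {N : ℕ} (R : Finset ((Fin N → ℕ) × (Fin N → ℕ)))
    (κ : ((Fin N → ℕ) × (Fin N → ℕ)) → ℝ → ℝ) (Λ : Finset (Fin N)) (t : ℝ)
    (u : Fin N → ℝ) : ℝ :=
  ∑ r ∈ R, κ r t * monom u r.1 *
    (Real.log (partialMonom Λ u r.2) - Real.log (partialMonom Λ u r.1))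

section

variable {N : ℕ} {C : Finset (Fin N → ℕ)} {R : Finset ((Fin N → ℕ) × (Fin N → ℕ))}
  {κ : ((Fin N → ℕ) × (Fin N → ℕ)) → ℝ → ℝ} {η B : ℝ} {x : ℝ → Fin N → ℝ}

lemma partialMonom_pos {Λ : Finset (Fin N)} {u : Fin N → ℝ} (hu : ∀ i ∈ Λ, 0 < u i)
    (y : Fin N → ℕ) : 0 < partialMonom Λ u y :=
  prod_pos fun i hi => pow_pos (hu i hi) _

lemma monomialSum_nonneg {Λ : Finset (Fin N)} {u : Fin N → ℝ} (hu : ∀ i, 0 < u i) :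
    0 ≤ monomialSum C Λ u :=
  sum_nonneg fun y _ => (partialMonom_pos (fun i _ => hu i) y).le

lemma partialMonom_le_monomialSum {Λ : Finset (Fin N)} {u : Fin N → ℝ} (hu : ∀ i, 0 < u i)
    {y : Fin N → ℕ} (hy : y ∈ C) :
    partialMonom Λ u y ≤ monomialSum C Λ u :=
  single_le_sum (fun y _ => (partialMonom_pos (fun i _ => hu i) y).le) hy

lemma continuous_partialMonom (Λ : Finset (Fin N)) (y : Fin N → ℕ) :
    Continuous fun u => partialMonom Λ u y :=
  continuous_finsetProd _ fun i _ => (continuous_apply i).pow _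

lemma monom_eq_partialMonom_mul (Λ : Finset (Fin N)) (u : Fin N → ℝ) (y : Fin N → ℕ) :
    monom u y = partialMonom Λ u y * partialMonom Λᶜ u y :=
  (prod_mul_prod_compl Λ _).symm

lemma log_partialMonom {Λ : Finset (Fin N)} {u : Fin N → ℝ} (hu : ∀ i ∈ Λ, 0 < u i)
    (y : Fin N → ℕ) :
    Real.log (partialMonom Λ u y) = cv y ⬝ᵥ restrictedLog Λ u := by
  rw [partialMonom, Real.log_prod fun i hi => (pow_pos (hu i hi) _).ne']
  simp [dotProduct, restrictedLog, cv, Real.log_pow, mul_ite, sum_ite_mem]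

lemma massActionField_apply (t : ℝ) (u : Fin N → ℝ) (i : Fin N) :
    massActionField R κ t u i = ∑ r ∈ R, κ r t * monom u r.1 * (cv r.2 i - cv r.1 i) := by
  simp [massActionField, Finset.sum_apply]

lemma massActionField_dotProduct (t : ℝ) (u v : Fin N → ℝ) :
    massActionField R κ t u ⬝ᵥ v = ∑ r ∈ R, κ r t * monom u r.1 * ((cv r.2 - cv r.1) ⬝ᵥ v) := by
  simp [massActionField, sum_dotProduct, smul_dotProduct]

lemma freeEnergyRate_eq_dotProduct {Λ : Finset (Fin N)} {u : Fin N → ℝ} (hu : ∀ i, 0 < u i)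
    (t : ℝ) :
    freeEnergyRate R κ Λ t u = massActionField R κ t u ⬝ᵥ restrictedLog Λ u := by
  simp only [massActionField_dotProduct, sub_dotProduct, freeEnergyRate,
    log_partialMonom fun i _ => hu i]

lemma hasDerivAt_freeEnergy {Λ : Finset (Fin N)} {x' : Fin N → ℝ} {t : ℝ}
    (hx : ∀ i, 0 < x t i) (hd : HasDerivAt x x' t) :
    HasDerivAt (fun s => freeEnergy Λ (x s)) (x' ⬝ᵥ restrictedLog Λ (x t)) t := by
  have hterm : ∀ i ∈ Λ, HasDerivAt (fun s => x s i * Real.log (x s i) - x s i)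
      (x' i * Real.log (x t i)) t := fun i _ => by
    have hi := hasDerivAt_pi.1 hd i
    refine ((hi.mul (hi.log (hx i).ne')).sub hi).congr_deriv ?_
    rw [mul_div_cancel₀ _ (hx i).ne']
    ring
  refine (HasDerivAt.fun_sum hterm).congr_deriv ?_
  simp [dotProduct, restrictedLog, mul_ite, sum_ite_mem]

lemma neg_card_le_freeEnergy {Λ : Finset (Fin N)} {u : Fin N → ℝ} (hu : ∀ i, 0 < u i) :
    -(Λ.card : ℝ) ≤ freeEnergy Λ u := by
  have hterm : ∀ i ∈ Λ, -1 ≤ u i * Real.log (u i) - u i := fun i _ => by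
    have h := mul_le_mul_of_nonneg_left (Real.one_sub_inv_le_log_of_pos (hu i)) (hu i).le
    rw [mul_sub, mul_one, mul_inv_cancel₀ (hu i).ne'] at h
    linarith
  simpa [freeEnergy] using sum_le_sum hterm

lemma freeEnergy_neg {Λ : Finset (Fin N)} {u : Fin N → ℝ} (hΛ : Λ.Nonempty)
    (hu : ∀ i ∈ Λ, 0 < u i ∧ u i < 1) :
    freeEnergy Λ u < 0 :=
  sum_neg (fun i hi => by
    have := Real.log_neg (hu i hi).1 (hu i hi).2
    nlinarith [(hu i hi).1]) hΛ

lemma continuous_freeEnergy (Λ : Finset (Fin N)) : Continuous (freeEnergy Λ) :=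
  continuous_finsetSum _ fun i _ =>
    (Real.continuous_mul_log.comp (continuous_apply i)).sub (continuous_apply i)

lemma hasDerivAt_freeEnergy_of_massAction (Λ : Finset (Fin N))
    (hpos : ∀ t, 0 ≤ t → ∀ i, 0 < x t i)
    (hODE : ∀ t, 0 ≤ t → HasDerivAt x (massActionField R κ t (x t)) t) {t : ℝ} (ht : 0 ≤ t) :
    HasDerivAt (fun s => freeEnergy Λ (x s)) (freeEnergyRate R κ Λ t (x t)) t := by
  rw [freeEnergyRate_eq_dotProduct (hpos t ht)]
  exact hasDerivAt_freeEnergy (hpos t ht) (hODE t ht)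

lemma dotProduct_eq_of_orthogonal {w : Fin N → ℝ} (hw : ∀ r ∈ R, w ⬝ᵥ (cv r.2 - cv r.1) = 0)
    (hODE : ∀ t, 0 ≤ t → HasDerivAt x (massActionField R κ t (x t)) t) {t : ℝ} (ht : 0 ≤ t) :
    w ⬝ᵥ x t = w ⬝ᵥ x 0 := by
  have hd : ∀ s, 0 ≤ s → HasDerivAt (fun s => w ⬝ᵥ x s) 0 s := fun s hs => by
    refine (HasDerivAt.fun_sum (u := univ) fun i _ =>
      (hasDerivAt_pi.1 (hODE s hs) i).const_mul (w i)).congr_deriv ?_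
    change w ⬝ᵥ massActionField R κ s (x s) = 0
    rw [dotProduct_comm, massActionField_dotProduct]
    exact sum_eq_zero fun r hr => by rw [dotProduct_comm, hw r hr, mul_zero]
  exact constant_of_has_deriv_right_zero
    (fun s hs => (hd s hs.1).continuousAt.continuousWithinAt)
    (fun s hs => (hd s hs.1).hasDerivWithinAt) t ⟨ht, le_rfl⟩

lemma neg_mul_monomialSum_le_massActionField_apply (hη : 0 < η)
    (hκ : ∀ r ∈ R, ∀ t : ℝ, 0 ≤ t → η < κ r t ∧ κ r t < 1 / η)
    (hRC : ∀ r ∈ R, r.1 ∈ C) {t : ℝ} (ht : 0 ≤ t) {u : Fin N → ℝ} (hu : ∀ i, 0 < u i)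
    (i : Fin N) :
    -((∑ r ∈ R, (r.1 i : ℝ)) / η * monomialSum C univ u) ≤ massActionField R κ t u i := by
  rw [massActionField_apply, sum_div, sum_mul, ← sum_neg_distrib]
  refine sum_le_sum fun r hr => ?_
  have hκr := hκ r hr t ht
  have hm : 0 < monom u r.1 := partialMonom_pos (fun i _ => hu i) r.1
  have hmA : monom u r.1 ≤ monomialSum C univ u := partialMonom_le_monomialSum hu (hRC r hr)
  have hrate : κ r t * monom u r.1 ≤ monomialSum C univ u / η := by
    rw [div_eq_inv_mul, ← one_div]
    exact mul_le_mul hκr.2.le hmA hm.le (by positivity)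
  have hy : (0 : ℝ) ≤ cv r.1 i := Nat.cast_nonneg _
  have hy' : (0 : ℝ) ≤ cv r.2 i := Nat.cast_nonneg _
  calc -((r.1 i : ℝ) / η * monomialSum C univ u)
      = -(monomialSum C univ u / η) * cv r.1 i := by simp only [cv]; ring
    _ ≤ -(κ r t * monom u r.1) * cv r.1 i := mul_le_mul_of_nonneg_right (neg_le_neg hrate) hy
    _ ≤ κ r t * monom u r.1 * (cv r.2 i - cv r.1 i) := by
        linarith [mul_nonneg (mul_pos (hη.trans hκr.1) hm).le hy']

lemma exists_subseq_tendsto_mem_omegaSet (hpos : ∀ t, 0 ≤ t → ∀ i, 0 < x t i)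
    (hbdd : ∀ t, 0 ≤ t → ∀ i, x t i ≤ B) {s : ℕ → ℝ} (hs : Tendsto s atTop atTop)
    (hs0 : ∀ n, 0 ≤ s n) :
    ∃ z ∈ omegaSet x, ∃ φ : ℕ → ℕ, StrictMono φ ∧
      Tendsto (fun n => x (s (φ n))) atTop (𝓝 z) := by
  have hbox : ∀ n, x (s n) ∈ Set.Icc 0 fun _ => B := fun n =>
    ⟨fun i => (hpos _ (hs0 n) i).le, fun i => hbdd _ (hs0 n) i⟩
  obtain ⟨z, -, φ, hφ, hz⟩ := isCompact_Icc.tendsto_subseq hbox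
  exact ⟨z, ⟨s ∘ φ, hs.comp hφ.tendsto_atTop, hz⟩, φ, hφ, hz⟩

lemma omegaSet_eq_singleton_of_tendsto {z : Fin N → ℝ} (hz : Tendsto x atTop (𝓝 z)) :
    omegaSet x = {z} := by
  ext z'
  refine ⟨fun ⟨s, hs, hz'⟩ => tendsto_nhds_unique hz' (hz.comp hs), ?_⟩
  rintro rfl
  exact ⟨fun n => n, tendsto_natCast_atTop_atTop, hz.comp tendsto_natCast_atTop_atTop⟩

lemma liminf_pos_of_forall_mem_omegaSet (hpos : ∀ t, 0 ≤ t → ∀ i, 0 < x t i)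
    (hbdd : ∀ t, 0 ≤ t → ∀ i, x t i ≤ B) {i : Fin N} (hω : ∀ z ∈ omegaSet x, 0 < z i) :
    0 < liminf (fun t => x t i) atTop := by
  obtain ⟨ε, hε, hev⟩ : ∃ ε > 0, ∀ᶠ t in atTop, ε ≤ x t i := by
    by_contra! h
    choose s hs hsmall using fun n : ℕ =>
      frequently_atTop.1 (h (1 / ((n : ℝ) + 1)) (by positivity)) n
    obtain ⟨z, hzω, φ, hφ, hz⟩ := exists_subseq_tendsto_mem_omegaSet hpos hbdd
      (tendsto_atTop_mono hs tendsto_natCast_atTop_atTop) fun n => (Nat.cast_nonneg n).trans (hs n)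
    have hzi : z i ≤ 0 :=
      le_of_tendsto_of_tendsto' (tendsto_pi_nhds.1 hz i)
        (tendsto_one_div_add_atTop_nhds_zero_nat.comp hφ.tendsto_atTop) fun n => (hsmall _).le
    exact (hω z hzω).not_ge hzi
  have hbddAbove : IsBoundedUnder (· ≤ ·) atTop fun t => x t i :=
    isBoundedUnder_of_eventually_le (eventually_ge_atTop 0 |>.mono fun t ht => hbdd t ht i)
  exact hε.trans_le (le_liminf_of_le hbddAbove.isCoboundedUnder_ge hev)

lemma dotProduct_pos_of_tendsto (hpos : ∀ t, 0 ≤ t → ∀ i, 0 < x t i)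
    (hODE : ∀ t, 0 ≤ t → HasDerivAt x (massActionField R κ t (x t)) t) {w : Fin N → ℝ}
    (hw0 : 0 ≤ w) (hwne : w ≠ 0) (hw : ∀ r ∈ R, w ⬝ᵥ (cv r.2 - cv r.1) = 0) {s : ℕ → ℝ}
    (hs0 : ∀ n, 0 ≤ s n) {z : Fin N → ℝ} (hz : Tendsto (fun n => x (s n)) atTop (𝓝 z)) :
    0 < w ⬝ᵥ z := by
  have hlim : Tendsto (fun n => w ⬝ᵥ x (s n)) atTop (𝓝 (w ⬝ᵥ z)) :=
    ((continuous_const (y := w)).dotProduct continuous_id |>.tendsto z).comp hz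
  rw [← tendsto_nhds_unique
    (tendsto_const_nhds.congr fun n => (dotProduct_eq_of_orthogonal hw hODE (hs0 n)).symm) hlim]
  obtain ⟨i, hi⟩ := Function.ne_iff.1 hwne
  exact sum_pos' (fun j _ => mul_nonneg (hw0 j) (hpos 0 le_rfl j).le)
    ⟨i, mem_univ i, mul_pos ((hw0 i).lt_of_ne' hi) (hpos 0 le_rfl i)⟩

lemma false_of_abs_log_ratio_le {Λ : Finset (Fin N)} (hpos : ∀ t, 0 ≤ t → ∀ i, 0 < x t i)
    (hODE : ∀ t, 0 ≤ t → HasDerivAt x (massActionField R κ t (x t)) t)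
    (hbdd : ∀ t, 0 ≤ t → ∀ i, x t i ≤ B) {s : ℕ → ℝ} (hs0 : ∀ n, 0 ≤ s n) {z : Fin N → ℝ}
    (hz : Tendsto (fun n => x (s n)) atTop (𝓝 z)) {i₀ : Fin N} (hi₀ : i₀ ∈ Λ) (hzi₀ : z i₀ = 0)
    (hratio : ∀ r ∈ R, ∃ K, ∀ n, |Real.log (partialMonom Λ (x (s n)) r.2) -
      Real.log (partialMonom Λ (x (s n)) r.1)| ≤ K) : False := by
  have hxs : ∀ n i, 0 < x (s n) i := fun n => hpos _ (hs0 n)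
  set v : ℕ → Fin N → ℝ := fun n => -restrictedLog Λ (x (s n))
  have hvM : ∀ n i, -|Real.log B| ≤ v n i := fun n i => by
    simp only [v, restrictedLog, Pi.neg_apply]
    split_ifs
    · exact neg_le_neg ((Real.log_le_log (hxs n i) (hbdd _ (hs0 n) i)).trans (le_abs_self _))
    · simp
  have hvi₀ : Tendsto (fun n => v n i₀) atTop atTop := by
    have h0 : Tendsto (fun n => x (s n) i₀) atTop (𝓝[>] 0) :=
      tendsto_nhdsWithin_iff.2 ⟨hzi₀ ▸ tendsto_pi_nhds.1 hz i₀, .of_forall fun n => hxs n i₀⟩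
    simpa [v, restrictedLog, hi₀, Function.comp_def] using Real.tendsto_log_nhdsGT_zero.comp h0
  obtain ⟨w, hw0, hwne, hworth, φ, hφ, hwtop⟩ := exists_recession_direction v hvM hvi₀
  have hcons : ∀ r ∈ R, w ⬝ᵥ (cv r.2 - cv r.1) = 0 := fun r hr => by
    obtain ⟨K, hK⟩ := hratio r hr
    rw [dotProduct_comm]
    refine hworth _ ⟨K, fun n => ?_⟩
    rw [dotProduct_neg, sub_dotProduct, ← log_partialMonom (fun i _ => hxs n i),
      ← log_partialMonom (fun i _ => hxs n i), abs_neg]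
    exact hK n
  have hwz : ∀ i, 0 < w i → z i = 0 := fun i hwi => by
    by_cases hiΛ : i ∈ Λ
    · have hxi : Tendsto (fun n => x (s (φ n)) i) atTop (𝓝 0) := by
        refine (Real.tendsto_exp_atBot.comp (tendsto_neg_atTop_atBot.comp (hwtop i hwi))).congr
          fun n => ?_
        simp [v, restrictedLog, hiΛ, Real.exp_log (hxs _ i)]
      exact tendsto_nhds_unique ((tendsto_pi_nhds.1 hz i).comp hφ.tendsto_atTop) hxi
    · have hconst := not_tendsto_const_atTop (0 : ℝ) (atTop : Filter ℕ)
      exact absurd (hwtop i hwi) (by simpa [v, restrictedLog, hiΛ] using hconst)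
  refine (dotProduct_pos_of_tendsto hpos hODE hw0 hwne hcons hs0 hz).ne' (sum_eq_zero fun i _ => ?_)
  rcases (hw0 i).lt_or_eq with hwi | hwi
  · rw [hwz i hwi, mul_zero]
  · rw [← hwi, Pi.zero_apply, zero_mul]

lemma reaction_term_le {k : ℝ} (hk : 0 ≤ k) {u : Fin N → ℝ} (hu : ∀ i, 0 < u i)
    (Λ : Finset (Fin N)) (y y' : Fin N → ℕ) :
    k * monom u y * (Real.log (partialMonom Λ u y') - Real.log (partialMonom Λ u y)) ≤
      k * partialMonom Λᶜ u y * partialMonom Λ u y' := by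
  set S := partialMonom Λ u
  have hS : ∀ y, 0 < S y := partialMonom_pos fun i _ => hu i
  have hP : 0 < partialMonom Λᶜ u y := partialMonom_pos (fun i _ => hu i) y
  calc k * monom u y * (Real.log (S y') - Real.log (S y))
      = k * partialMonom Λᶜ u y * (S y * (Real.log (S y') - Real.log (S y))) := by
        rw [monom_eq_partialMonom_mul Λ]; ring
    _ ≤ k * partialMonom Λᶜ u y * S y' :=
        mul_le_mul_of_nonneg_left
          ((mul_log_sub_log_le (hS y) (hS y')).trans (sub_le_self _ (hS y).le))
          (mul_nonneg hk hP.le)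

lemma reaction_term_le_of_tierDrop {Λ : Finset (Fin N)} {k : ℝ} (hη : 0 < η) (hk : η ≤ k)
    {u : Fin N → ℝ} (hu : ∀ i, 0 < u i) {yc : Fin N → ℕ} (hyc : yc ∈ C)
    (hmax : ∀ y ∈ C, partialMonom Λ u y ≤ partialMonom Λ u yc) {a b : Fin N → ℕ} {M : ℝ}
    (ha : M ≤ Real.log (partialMonom Λ u a) - Real.log (partialMonom Λ u yc))
    (hb : Real.log (partialMonom Λ u b) - Real.log (partialMonom Λ u yc) ≤ M) :
    k * monom u a * (Real.log (partialMonom Λ u b) - Real.log (partialMonom Λ u a)) ≤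
      monomialSum C Λ u * (η * partialMonom Λᶜ u a * Real.exp M / C.card *
        (Real.log (partialMonom Λ u b) - Real.log (partialMonom Λ u yc) - M)) := by
  set A := monomialSum C Λ u
  set S := partialMonom Λ u
  set P := partialMonom Λᶜ u
  have hS : ∀ y, 0 < S y := partialMonom_pos fun i _ => hu i
  have hPa : 0 < P a := partialMonom_pos (fun i _ => hu i) a
  have hcard : (0 : ℝ) < C.card := by exact_mod_cast card_pos.2 ⟨yc, hyc⟩
  have hAyc : A ≤ C.card * S yc := by
    simpa [A, monomialSum] using sum_le_card_nsmul C S (S yc) hmax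
  have hSa : Real.exp M * S yc ≤ S a := by
    have h := Real.exp_le_exp.2 ha
    rwa [Real.exp_sub, Real.exp_log (hS a), Real.exp_log (hS yc), le_div_iff₀ (hS yc)] at h
  have hcoef : η * P a * Real.exp M / C.card * A ≤ k * (P a * S a) :=
    calc η * P a * Real.exp M / C.card * A ≤ η * P a * (Real.exp M * S yc) := by
          rw [div_mul_eq_mul_div, div_le_iff₀ hcard]
          nlinarith [mul_le_mul_of_nonneg_left hAyc
            (mul_nonneg (mul_nonneg hη.le hPa.le) (Real.exp_pos M).le)]
      _ ≤ η * P a * S a := mul_le_mul_of_nonneg_left hSa (mul_nonneg hη.le hPa.le)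
      _ ≤ k * (P a * S a) := by
          rw [← mul_assoc]
          exact mul_le_mul_of_nonneg_right (mul_le_mul_of_nonneg_right hk hPa.le) (hS a).le
  calc k * monom u a * (Real.log (S b) - Real.log (S a))
      = k * (P a * S a) * (Real.log (S b) - Real.log (S a)) := by
        rw [monom_eq_partialMonom_mul Λ]; ring
    _ ≤ k * (P a * S a) * (Real.log (S b) - Real.log (S yc) - M) :=
        mul_le_mul_of_nonneg_left (by linarith)
          (mul_nonneg (hη.le.trans hk) (mul_pos hPa (hS a)).le)
    _ ≤ η * P a * Real.exp M / C.card * A * (Real.log (S b) - Real.log (S yc) - M) :=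
        mul_le_mul_of_nonpos_right hcoef (by linarith)
    _ = _ := by ring

lemma freeEnergyRate_le_of_tierDrop {Λ : Finset (Fin N)} (hη : 0 < η)
    (hκ : ∀ r ∈ R, ∀ t : ℝ, 0 ≤ t → η < κ r t ∧ κ r t < 1 / η)
    (hRC : ∀ r ∈ R, r.1 ∈ C ∧ r.2 ∈ C) {t : ℝ} (ht : 0 ≤ t) {u : Fin N → ℝ}
    (hu : ∀ i, 0 < u i) {yc : Fin N → ℕ} (hyc : yc ∈ C)
    (hmax : ∀ y ∈ C, partialMonom Λ u y ≤ partialMonom Λ u yc) {a b : Fin N → ℕ}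
    (hab : (a, b) ∈ R) {M : ℝ}
    (ha : M ≤ Real.log (partialMonom Λ u a) - Real.log (partialMonom Λ u yc))
    (hb : Real.log (partialMonom Λ u b) - Real.log (partialMonom Λ u yc) ≤ M) :
    freeEnergyRate R κ Λ t u ≤ monomialSum C Λ u *
      (η * partialMonom Λᶜ u a * Real.exp M / C.card *
          (Real.log (partialMonom Λ u b) - Real.log (partialMonom Λ u yc) - M) +
        ∑ r ∈ R, partialMonom Λᶜ u r.1 / η) := by
  have hP : ∀ y, 0 < partialMonom Λᶜ u y := partialMonom_pos fun i _ => hu i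
  have hother : ∀ r ∈ R, κ r t * monom u r.1 *
      (Real.log (partialMonom Λ u r.2) - Real.log (partialMonom Λ u r.1)) ≤
      monomialSum C Λ u * (partialMonom Λᶜ u r.1 / η) := fun r hr => by
    have hκr := hκ r hr t ht
    refine (reaction_term_le (hη.trans hκr.1).le hu Λ r.1 r.2).trans ?_
    calc κ r t * partialMonom Λᶜ u r.1 * partialMonom Λ u r.2
        ≤ 1 / η * partialMonom Λᶜ u r.1 * monomialSum C Λ u :=
          mul_le_mul (mul_le_mul_of_nonneg_right hκr.2.le (hP _).le)
            (partialMonom_le_monomialSum hu (hRC r hr).2)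
            (partialMonom_pos (fun i _ => hu i) _).le
            (mul_nonneg (one_div_pos.2 hη).le (hP _).le)
      _ = monomialSum C Λ u * (partialMonom Λᶜ u r.1 / η) := by ring
  rw [freeEnergyRate, ← add_sum_erase R _ hab, mul_add, mul_sum]
  refine add_le_add (reaction_term_le_of_tierDrop hη (hκ _ hab t ht).1.le hu hyc hmax ha hb)
    ((sum_le_sum fun r hr => hother r (mem_of_mem_erase hr)).trans
      (sum_le_sum_of_subset_of_nonneg (erase_subset _ _) fun r _ _ => ?_))
  exact mul_nonneg (monomialSum_nonneg hu) (div_nonneg (hP _).le hη.le)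

lemma eventually_freeEnergyRate_le_of_tierDrop {Λ : Finset (Fin N)} (hη : 0 < η)
    (hκ : ∀ r ∈ R, ∀ t : ℝ, 0 ≤ t → η < κ r t ∧ κ r t < 1 / η)
    (hRC : ∀ r ∈ R, r.1 ∈ C ∧ r.2 ∈ C) {τ : ℕ → ℝ} (hτ : ∀ n, 0 ≤ τ n)
    {p : ℕ → Fin N → ℝ} (hp : ∀ n i, 0 < p n i) {z : Fin N → ℝ} (hz : Tendsto p atTop (𝓝 z))
    (hsupp : ∀ i ∉ Λ, 0 < z i) {yc : Fin N → ℕ} (hyc : yc ∈ C)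
    (hmax : ∀ n, ∀ y ∈ C, partialMonom Λ (p n) y ≤ partialMonom Λ (p n) yc)
    {a b : Fin N → ℕ} (hab : (a, b) ∈ R) {M : ℝ}
    (ha : ∀ n, M ≤ Real.log (partialMonom Λ (p n) a) - Real.log (partialMonom Λ (p n) yc))
    (hb : Tendsto (fun n => Real.log (partialMonom Λ (p n) b) -
      Real.log (partialMonom Λ (p n) yc)) atTop atBot) :
    ∀ᶠ n in atTop, freeEnergyRate R κ Λ (τ n) (p n) ≤ -monomialSum C Λ (p n) := by
  have hP : ∀ y, Tendsto (fun n => partialMonom Λᶜ (p n) y) atTop (𝓝 (partialMonom Λᶜ z y)) :=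
    fun y => ((continuous_partialMonom Λᶜ y).tendsto z).comp hz
  have hPa : 0 < partialMonom Λᶜ z a :=
    partialMonom_pos (fun i hi => hsupp i (mem_compl.1 hi)) a
  have hcard : (0 : ℝ) < C.card := by exact_mod_cast card_pos.2 ⟨yc, hyc⟩
  have hcoef := (((hP a).const_mul η).mul_const (Real.exp M)).div_const (C.card : ℝ)
  have hdrop : Tendsto (fun n => Real.log (partialMonom Λ (p n) b) -
      Real.log (partialMonom Λ (p n) yc) - M) atTop atBot := by
    simpa only [sub_eq_add_neg] using hb.atBot_add (tendsto_const_nhds (x := -M))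
  have hbound := (hcoef.pos_mul_atBot (by positivity) hdrop).atBot_add
    (tendsto_finsetSum R fun r _ => (hP r.1).div_const η)
  filter_upwards [hbound.eventually_le_atBot (-1), hb.eventually_le_atBot M] with n h1 h2
  have hrate := freeEnergyRate_le_of_tierDrop hη hκ hRC (hτ n) (hp n) hyc (hmax n) hab (ha n) h2
  have hA := monomialSum_nonneg (C := C) (Λ := Λ) (hp n)
  linarith [mul_le_mul_of_nonneg_left h1 hA]

lemma exists_freeEnergyRate_le_of_tendsto {Λ : Finset (Fin N)} (hRC : ∀ r ∈ R, r.1 ∈ C ∧ r.2 ∈ C)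
    (hreach : ∀ y ∈ C, ∀ y' ∈ C, Relation.ReflTransGen (dirStep R) y y') (hη : 0 < η)
    (hκ : ∀ r ∈ R, ∀ t : ℝ, 0 ≤ t → η < κ r t ∧ κ r t < 1 / η)
    (hpos : ∀ t, 0 ≤ t → ∀ i, 0 < x t i)
    (hODE : ∀ t, 0 ≤ t → HasDerivAt x (massActionField R κ t (x t)) t)
    (hbdd : ∀ t, 0 ≤ t → ∀ i, x t i ≤ B) (hzero : ∀ z ∈ omegaSet x, ∃ i ∈ Λ, z i = 0)
    (hsupp : ∀ z ∈ omegaSet x, ∀ i ∉ Λ, 0 < z i) {s : ℕ → ℝ} (hs : Tendsto s atTop atTop)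
    (hs0 : ∀ n, 0 ≤ s n) :
    ∃ n, freeEnergyRate R κ Λ (s n) (x (s n)) ≤ -monomialSum C Λ (x (s n)) := by
  obtain rfl | hC := C.eq_empty_or_nonempty
  · have hR : R = ∅ := eq_empty_of_forall_notMem fun r hr => by simpa using (hRC r hr).1
    exact ⟨0, by simp [freeEnergyRate, monomialSum, hR]⟩
  obtain ⟨z, hzω, φ₁, hφ₁, hz⟩ := exists_subseq_tendsto_mem_omegaSet hpos hbdd hs hs0
  set S : (Fin N → ℕ) → ℕ → ℝ := fun y n => partialMonom Λ (x (s (φ₁ n))) y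
  obtain ⟨yc, hyc, hfreq⟩ := exists_frequently_forall_le C hC S
  obtain ⟨φ₂, hφ₂, hmax⟩ := extraction_of_frequently_atTop hfreq
  obtain ⟨φ₃, hφ₃, htier⟩ := exists_subseq_bddBelow_or_tendsto_atBot C
    fun y n => Real.log (S y (φ₂ n)) - Real.log (S yc (φ₂ n))
  have hzφ : Tendsto (fun n => x (s (φ₁ (φ₂ (φ₃ n))))) atTop (𝓝 z) :=
    hz.comp (hφ₂.comp hφ₃).tendsto_atTop
  set IsTop : (Fin N → ℕ) → Prop :=
    fun y => ∃ M, ∀ n, M ≤ Real.log (S y (φ₂ (φ₃ n))) - Real.log (S yc (φ₂ (φ₃ n)))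
  by_cases hall : ∀ y ∈ C, IsTop y
  · have hle : ∀ y ∈ C, ∀ n, Real.log (S y (φ₂ (φ₃ n))) - Real.log (S yc (φ₂ (φ₃ n))) ≤ 0 :=
      fun y hy n => sub_nonpos.2 (Real.log_le_log
        (partialMonom_pos (fun i _ => hpos _ (hs0 _) i) y) (hmax _ y hy))
    obtain ⟨i₀, hi₀, hzi₀⟩ := hzero z hzω
    refine (false_of_abs_log_ratio_le hpos hODE hbdd (fun n => hs0 _) hzφ hi₀ hzi₀
      fun r hr => ?_).elim
    obtain ⟨M₁, h₁⟩ := hall _ (hRC r hr).1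
    obtain ⟨M₂, h₂⟩ := hall _ (hRC r hr).2
    refine ⟨|M₁| + |M₂|, fun n => abs_le.2 ⟨?_, ?_⟩⟩
    · linarith [h₂ n, hle _ (hRC r hr).1 n, neg_abs_le M₂, abs_nonneg M₁]
    · linarith [h₁ n, hle _ (hRC r hr).2 n, neg_abs_le M₁, abs_nonneg M₂]
  · push Not at hall
    obtain ⟨y, hy, hyTop⟩ := hall
    obtain ⟨a, b, hab, ⟨M, hM⟩, hbTop⟩ :=
      (hreach yc hyc y hy).exists_boundary_step IsTop ⟨0, by simp⟩ (by simpa [IsTop] using hyTop)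
    have hab : (a, b) ∈ R := hab
    obtain ⟨n, hn⟩ := (eventually_freeEnergyRate_le_of_tierDrop hη hκ hRC (fun n => hs0 _)
      (fun n => hpos _ (hs0 _)) hzφ (hsupp z hzω) hyc (fun n => hmax (φ₃ n)) hab hM
      ((htier b (hRC _ hab).2).resolve_left hbTop)).exists
    exact ⟨_, hn⟩

theorem eventually_freeEnergyRate_le {Λ : Finset (Fin N)} (hRC : ∀ r ∈ R, r.1 ∈ C ∧ r.2 ∈ C)
    (hreach : ∀ y ∈ C, ∀ y' ∈ C, Relation.ReflTransGen (dirStep R) y y') (hη : 0 < η)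
    (hκ : ∀ r ∈ R, ∀ t : ℝ, 0 ≤ t → η < κ r t ∧ κ r t < 1 / η)
    (hpos : ∀ t, 0 ≤ t → ∀ i, 0 < x t i)
    (hODE : ∀ t, 0 ≤ t → HasDerivAt x (massActionField R κ t (x t)) t)
    (hbdd : ∀ t, 0 ≤ t → ∀ i, x t i ≤ B) (hzero : ∀ z ∈ omegaSet x, ∃ i ∈ Λ, z i = 0)
    (hsupp : ∀ z ∈ omegaSet x, ∀ i ∉ Λ, 0 < z i) :
    ∀ᶠ t in atTop, freeEnergyRate R κ Λ t (x t) ≤ -monomialSum C Λ (x t) := by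
  by_contra h
  obtain ⟨s, hs, hbad⟩ := exists_seq_forall_of_frequently
    ((not_eventually.1 h).and_eventually (eventually_ge_atTop 0))
  obtain ⟨n, hn⟩ := exists_freeEnergyRate_le_of_tendsto hRC hreach hη hκ hpos hODE hbdd hzero
    hsupp hs fun n => (hbad n).2
  exact (hbad n).1 hn

lemma exists_tendsto_of_eventually_freeEnergyRate_le (hRC : ∀ r ∈ R, r.1 ∈ C) (hη : 0 < η)
    (hκ : ∀ r ∈ R, ∀ t : ℝ, 0 ≤ t → η < κ r t ∧ κ r t < 1 / η)
    (hpos : ∀ t, 0 ≤ t → ∀ i, 0 < x t i)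
    (hODE : ∀ t, 0 ≤ t → HasDerivAt x (massActionField R κ t (x t)) t)
    (hbdd : ∀ t, 0 ≤ t → ∀ i, x t i ≤ B)
    (hdecay : ∀ᶠ t in atTop, freeEnergyRate R κ univ t (x t) ≤ -monomialSum C univ (x t)) :
    ∃ z, Tendsto x atTop (𝓝 z) := by
  obtain ⟨T, hT⟩ := eventually_atTop.1 (hdecay.and (eventually_ge_atTop 0))
  set W : ℝ → ℝ := fun t => freeEnergy univ (x t)
  have hW : ∀ t, T ≤ t → HasDerivAt W (freeEnergyRate R κ univ t (x t)) t := fun t ht =>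
    hasDerivAt_freeEnergy_of_massAction univ hpos hODE (hT t ht).2
  have hWlow : ∀ t, T ≤ t → -(N : ℝ) ≤ W t := fun t ht => by
    simpa using neg_card_le_freeEnergy (Λ := univ) (hpos t (hT t ht).2)
  have hA : ∀ t, T ≤ t → 0 ≤ monomialSum C univ (x t) := fun t ht =>
    monomialSum_nonneg (hpos t (hT t ht).2)
  obtain ⟨L, hL⟩ : ∃ L, Tendsto W atTop (𝓝 L) := by
    obtain ⟨L, hL⟩ := exists_tendsto_of_hasDerivAt_nonneg (f := -W) (M := N)
      (fun t ht => (hW t ht).neg) (fun t ht => by linarith [(hT t ht).1, hA t ht])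
      (fun t ht => by linarith [hWlow t ht, show (-W) t = -W t from rfl])
    exact ⟨-L, by simpa using hL.neg⟩
  have hcoord : ∀ i, ∃ L, Tendsto (fun t => x t i) atTop (𝓝 L) := fun i => by
    set K := (∑ r ∈ R, (r.1 i : ℝ)) / η
    have hK : 0 ≤ K := div_nonneg (sum_nonneg fun r _ => Nat.cast_nonneg _) hη.le
    obtain ⟨L', hL'⟩ := exists_tendsto_of_hasDerivAt_nonneg (f := fun t => x t i - K * W t)
      (M := B + K * N)
      (fun t ht => (hasDerivAt_pi.1 (hODE t (hT t ht).2) i).sub ((hW t ht).const_mul K))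
      (fun t ht => by
        have h1 := neg_mul_monomialSum_le_massActionField_apply hη hκ hRC (hT t ht).2
          (hpos t (hT t ht).2) i
        linarith [mul_le_mul_of_nonneg_left (hT t ht).1 hK])
      (fun t ht => by
        linarith [mul_le_mul_of_nonneg_left (hWlow t ht) hK, hbdd t (hT t ht).2 i])
    exact ⟨L' + K * L, by simpa using hL'.add (hL.const_mul K)⟩
  choose L hL using hcoord
  exact ⟨L, tendsto_pi_nhds.2 hL⟩

lemma not_forall_mem_omegaSet_exists_eq_zero (hRC : ∀ r ∈ R, r.1 ∈ C ∧ r.2 ∈ C)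
    (hreach : ∀ y ∈ C, ∀ y' ∈ C, Relation.ReflTransGen (dirStep R) y y') (hη : 0 < η)
    (hκ : ∀ r ∈ R, ∀ t : ℝ, 0 ≤ t → η < κ r t ∧ κ r t < 1 / η)
    (hpos : ∀ t, 0 ≤ t → ∀ i, 0 < x t i)
    (hODE : ∀ t, 0 ≤ t → HasDerivAt x (massActionField R κ t (x t)) t)
    (hbdd : ∀ t, 0 ≤ t → ∀ i, x t i ≤ B) :
    ¬ ∀ z ∈ omegaSet x, ∃ i, z i = 0 := by
  intro hbd
  obtain ⟨z, hz⟩ := exists_tendsto_of_eventually_freeEnergyRate_le (fun r hr => (hRC r hr).1)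
    hη hκ hpos hODE hbdd (eventually_freeEnergyRate_le hRC hreach hη hκ hpos hODE hbdd
      (fun z hz => by simpa using hbd z hz) fun _ _ i hi => absurd (mem_univ i) hi)
  have hω := omegaSet_eq_singleton_of_tendsto hz
  obtain ⟨i₀, hi₀⟩ := hbd z (by simp [hω])
  have hz0 : ∀ i, 0 ≤ z i := fun i => ge_of_tendsto (tendsto_pi_nhds.1 hz i)
    ((eventually_ge_atTop 0).mono fun t ht => (hpos t ht i).le)
  set Λ := univ.filter fun i => z i = 0
  have hΛ : ∀ i, i ∈ Λ ↔ z i = 0 := by simp [Λ]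
  obtain ⟨T, hT⟩ := eventually_atTop.1 ((eventually_freeEnergyRate_le (Λ := Λ) hRC hreach hη hκ
    hpos hODE hbdd (by simpa [hω, hΛ] using ⟨i₀, hi₀⟩)
    (by simpa [hω, hΛ] using fun i hi => (hz0 i).lt_of_ne' hi)).and (eventually_ge_atTop 0))
  have hmono : MonotoneOn (fun t => -freeEnergy Λ (x t)) (Set.Ici T) :=
    monotoneOn_Ici_of_hasDerivAt
      (fun t ht => (hasDerivAt_freeEnergy_of_massAction Λ hpos hODE (hT t ht).2).neg)
      fun t ht => by
        linarith [(hT t ht).1, monomialSum_nonneg (C := C) (Λ := Λ) (hpos t (hT t ht).2)]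
  have hlim : Tendsto (fun t => freeEnergy Λ (x t)) atTop (𝓝 0) := by
    have h0 : freeEnergy Λ z = 0 := sum_eq_zero fun i hi => by simp [(hΛ i).1 hi]
    rw [← h0]
    exact ((continuous_freeEnergy Λ).tendsto z).comp hz
  have hsmall : ∀ᶠ t in atTop, ∀ i ∈ Λ, 0 < x t i ∧ x t i < 1 :=
    (eventually_all_finset Λ).2 fun i hi =>
      ((eventually_ge_atTop 0).mono fun t ht => hpos t ht i).and
        ((tendsto_pi_nhds.1 hz i).eventually (gt_mem_nhds (by simp [(hΛ i).1 hi])))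
  obtain ⟨t, htT, ht⟩ := ((eventually_ge_atTop T).and hsmall).exists
  have hnonneg : 0 ≤ freeEnergy Λ (x t) := le_of_tendsto hlim <|
    (eventually_ge_atTop t).mono fun s hs => neg_le_neg_iff.1 (hmono htT (htT.trans hs) hs)
  exact (freeEnergy_neg ⟨i₀, (hΛ i₀).2 hi₀⟩ ht).not_ge hnonneg

end

theorem stmt_10_general {N : ℕ}
    (C : Finset (Fin N → ℕ)) (R : Finset ((Fin N → ℕ) × (Fin N → ℕ)))
    (hnet : IsNetwork C R) (hwr : WeaklyReversible R)
    (hsingle : ∀ y ∈ C, ∀ y' ∈ C, Relation.ReflTransGen (symStep R) y y')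
    (κ : ((Fin N → ℕ) × (Fin N → ℕ)) → ℝ → ℝ) (η : ℝ) (hη : 0 < η)
    (hκ : ∀ r ∈ R, ∀ t : ℝ, 0 ≤ t → η < κ r t ∧ κ r t < 1 / η)
    (x : ℝ → Fin N → ℝ)
    (hpos : ∀ t : ℝ, 0 ≤ t → ∀ i, 0 < x t i)
    (hODE : ∀ t : ℝ, 0 ≤ t →
      HasDerivAt x (∑ r ∈ R, (κ r t * monom (x t) r.1) • (cv r.2 - cv r.1)) t)
    (hbdd : ∃ B : ℝ, ∀ t : ℝ, 0 ≤ t → ∀ i, x t i ≤ B)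
    (hdich : (∀ z ∈ omegaSet x, (∀ i, 0 ≤ z i) ∧ ∃ i, z i = 0) ∨
             (∀ z ∈ omegaSet x, ∀ i, 0 < z i)) :
    (∀ z ∈ omegaSet x, ¬ ((∀ i, 0 ≤ z i) ∧ ∃ i, z i = 0)) ∧
    (∀ i, 0 < Filter.liminf (fun t => x t i) atTop) := by
  obtain ⟨B, hB⟩ := hbdd
  have hRC : ∀ r ∈ R, r.1 ∈ C ∧ r.2 ∈ C := fun r hr => ⟨(hnet.1 r hr).1, (hnet.1 r hr).2.1⟩
  have hreach : ∀ y ∈ C, ∀ y' ∈ C, Relation.ReflTransGen (dirStep R) y y' :=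
    fun y hy y' hy' => hwr y y' (hsingle y hy y' hy')
  have hinterior : ∀ z ∈ omegaSet x, ∀ i, 0 < z i := hdich.resolve_left fun hbd =>
    not_forall_mem_omegaSet_exists_eq_zero hRC hreach hη hκ hpos hODE hB fun z hz => (hbd z hz).2
  refine ⟨fun z hz ⟨_, i, hi⟩ => (hinterior z hz i).ne' hi, fun i => ?_⟩
  exact liminf_pos_of_forall_mem_omegaSet hpos hB fun z hz => hinterior z hz i

/-- For a weakly reversible, single-linkage-class *non-autonomous* mass-action system with
bounded kinetics, any bounded trajectory whose ω-limit set is entirely contained in the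
boundary of the nonnegative orthant or entirely contained in the open orthant has no
ω-limit point on the boundary, and the trajectory is persistent. -/
theorem stmt_10 {N : ℕ} (hN : 0 < N)
    (C : Finset (Fin N → ℕ)) (R : Finset ((Fin N → ℕ) × (Fin N → ℕ)))
    (hnet : IsNetwork C R) (hwr : WeaklyReversible R)
    (hsingle : ∀ y ∈ C, ∀ y' ∈ C, Relation.ReflTransGen (symStep R) y y')
    (κ : ((Fin N → ℕ) × (Fin N → ℕ)) → ℝ → ℝ) (η : ℝ) (hη : 0 < η)
    (hκ : ∀ r ∈ R, ∀ t : ℝ, 0 ≤ t → η < κ r t ∧ κ r t < 1 / η)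
    (x : ℝ → Fin N → ℝ) (x0 : Fin N → ℝ) (hx0 : x 0 = x0) (hx0pos : ∀ i, 0 < x0 i)
    (hpos : ∀ t : ℝ, 0 ≤ t → ∀ i, 0 < x t i)
    (hODE : ∀ t : ℝ, 0 ≤ t →
      HasDerivAt x (∑ r ∈ R, (κ r t * monom (x t) r.1) • (cv r.2 - cv r.1)) t)
    (hbdd : ∃ B : ℝ, ∀ t : ℝ, 0 ≤ t → ∀ i, x t i ≤ B)
    (hdich : (∀ z ∈ omegaSet x, (∀ i, 0 ≤ z i) ∧ ∃ i, z i = 0) ∨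
             (∀ z ∈ omegaSet x, ∀ i, 0 < z i)) :
    (∀ z ∈ omegaSet x, ¬ ((∀ i, 0 ≤ z i) ∧ ∃ i, z i = 0)) ∧
    (∀ i, 0 < Filter.liminf (fun t => x t i) atTop) :=
  stmt_10_general C R hnet hwr hsingle κ η hη hκ x hpos hODE hbdd hdich
end

section
/- Let (C, R) be a weakly reversible chemical reaction network on N species, and let C be partitioned into ordered tiers T_1, …, T_P (nonempty pairwise disjoint sets with union C). Suppose y_0 → y_0' ∈ R is a reaction whose source y_0 lies in tier T_i and whose product y_0' lies in tier T_{i−m} for some m ∈ {1,…,i−1}. Then there exist reactions r_1, …, r_b ∈ R such that, writing d_{ℓ,s} and d_{ℓ,p} for the tier indices of the source and product complexes of r_ℓ respectively: (1) d_{1,s} ≤ i − m; (2) d_{ℓ,s} < d_{ℓ,p} for every ℓ ∈ {1,…,b}; (3) d_{ℓ,s} ≤ d_{ℓ−1,p} for every ℓ ∈ {2,…,b}; (4) d_{b,p} ≥ i; and (5) d_{ℓ,s} < i for every ℓ ∈ {1,…,b}. -/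
theorem Relation.ReflTransGen.exists_seq {α : Type*} {r : α → α → Prop} {a b : α}
    (h : Relation.ReflTransGen r a b) :
    ∃ (k : ℕ) (z : ℕ → α), z 0 = a ∧ z k = b ∧ ∀ j < k, r (z j) (z (j + 1)) := by
  induction h with
  | refl => exact ⟨0, fun _ => a, rfl, rfl, by simp⟩
  | @tail _ d _ hcd ih =>
    obtain ⟨k, z, hz0, hzk, hz⟩ := ih
    refine ⟨k + 1, fun j => if j ≤ k then z j else d, by simpa using hz0, by simp, fun j hj => ?_⟩
    rcases Nat.lt_succ_iff_lt_or_eq.mp hj with hj | rfl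
    · simpa [hj.le, Nat.succ_le_of_lt hj] using hz j hj
    · simpa [hzk] using hcd

section Climb

variable {α : Type*} [LinearOrder α]

/-- The steps `s ℓ → s ℓ + 1` of the sequence `t`, for `ℓ < b`, climb from `lo` to `hi`. -/
structure IsClimb (t : ℕ → α) (lo hi : α) (b : ℕ) (s : ℕ → ℕ) : Prop where
  pos : 0 < b
  start_le : t (s 0) ≤ lo
  step_lt : ∀ ℓ < b, t (s ℓ) < t (s ℓ + 1)
  le_prev : ∀ ℓ, 1 ≤ ℓ → ℓ < b → t (s ℓ) ≤ t (s (ℓ - 1) + 1)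
  hi_le : hi ≤ t (s (b - 1) + 1)
  lt_hi : ∀ ℓ < b, t (s ℓ) < hi

variable {t : ℕ → α} {lo hi : α} {j : ℕ}

theorem IsClimb.single (hj : t j ≤ lo) (hlo : lo < hi) (hhi : hi ≤ t (j + 1)) :
    IsClimb t lo hi 1 fun _ => j where
  pos := one_pos
  start_le := hj
  step_lt _ _ := (hj.trans_lt hlo).trans_le hhi
  le_prev _ h1 h2 := absurd h2 (by omega)
  hi_le := hhi
  lt_hi _ _ := hj.trans_lt hlo

theorem IsClimb.cons {b : ℕ} {s : ℕ → ℕ} (h : IsClimb t (t (j + 1)) hi b s)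
    (hj : t j ≤ lo) (hlo : lo < t (j + 1)) (hhi : lo < hi) :
    IsClimb t lo hi (b + 1) fun ℓ => if ℓ = 0 then j else s (ℓ - 1) where
  pos := b.succ_pos
  start_le := by simpa using hj
  step_lt
    | 0, _ => by simpa using hj.trans_lt hlo
    | ℓ + 1, hℓ => by simpa using h.step_lt ℓ (by omega)
  le_prev
    | 1, _, _ => by simpa using h.start_le
    | ℓ + 2, _, hℓ => by simpa using h.le_prev (ℓ + 1) (by omega) (by omega)
  hi_le := by simpa [h.pos.ne'] using h.hi_le
  lt_hi
    | 0, _ => by simpa using hj.trans_lt hhi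
    | ℓ + 1, hℓ => by simpa using h.lt_hi ℓ (by omega)

theorem exists_isClimb (t : ℕ → α) {lo hi : α} (m d : ℕ) (hm : t m ≤ lo) (hlo : lo < hi)
    (hd : hi ≤ t (m + d)) :
    ∃ b s, IsClimb t lo hi b s ∧ ∀ ℓ < b, s ℓ < m + d := by
  induction d generalizing m lo with
  | zero => exact absurd (hm.trans_lt (hlo.trans_le hd)) (lt_irrefl _)
  | succ d ih =>
    rw [show m + (d + 1) = m + 1 + d by omega] at hd ⊢
    by_cases hup : t (m + 1) ≤ lo
    · exact ih (m + 1) hup hlo hd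
    by_cases hreach : hi ≤ t (m + 1)
    · exact ⟨1, _, .single hm hlo hreach, fun _ _ => by omega⟩
    rw [not_le] at hup hreach
    obtain ⟨b, s, hs, hsd⟩ := ih (m + 1) le_rfl hreach hd
    refine ⟨b + 1, _, hs.cons hm hup hlo, fun ℓ hℓ => ?_⟩
    rcases ℓ with _ | ℓ
    · show m < m + 1 + d
      omega
    · simpa using hsd ℓ (by omega)

end Climb

theorem exists_labelling_of_mem_iUnion {ι V : Type*} {T : ι → Set V} {z : ℕ → V} {k : ℕ} {a c : ι}
    (hk : k ≠ 0) (hz : ∀ j ≤ k, z j ∈ ⋃ i, T i) (ha : z 0 ∈ T a) (hc : z k ∈ T c) :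
    ∃ τ : ℕ → ι, τ 0 = a ∧ τ k = c ∧ ∀ j ≤ k, z j ∈ T (τ j) := by
  have hex : ∀ j, ∃ i, j ≤ k → z j ∈ T i := fun j =>
    if hj : j ≤ k then (Set.mem_iUnion.mp (hz j hj)).imp fun _ h _ => h else ⟨a, (absurd · hj)⟩
  choose τ hτ using hex
  refine ⟨fun j => if j = 0 then a else if j = k then c else τ j, by simp, by simp [hk], ?_⟩
  intro j hj
  dsimp only
  split_ifs with h0 hjk
  · exact h0 ▸ ha
  · exact hjk ▸ hc
  · exact hτ j hj

theorem stmt_16_general {N P : ℕ} (C : Finset (Fin N → ℕ)) (R : Finset ((Fin N → ℕ) × (Fin N → ℕ)))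
    (hnet : IsNetwork C R) (hwr : WeaklyReversible R)
    (T : Fin P → Set (Fin N → ℕ))
    (hTunion : (⋃ i, T i) = (C : Set (Fin N → ℕ)))
    (y0 y0' : Fin N → ℕ) (hr : (y0, y0') ∈ R)
    (i0 i1 : Fin P) (hy0 : y0 ∈ T i0) (hy0' : y0' ∈ T i1) (hlt : i1 < i0) :
    ∃ b : ℕ, 0 < b ∧
      ∃ (rs : ℕ → (Fin N → ℕ) × (Fin N → ℕ)) (ds dp : ℕ → Fin P),
        (∀ ℓ < b, rs ℓ ∈ R ∧ (rs ℓ).1 ∈ T (ds ℓ) ∧ (rs ℓ).2 ∈ T (dp ℓ)) ∧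
        ds 0 ≤ i1 ∧
        (∀ ℓ < b, ds ℓ < dp ℓ) ∧
        (∀ ℓ, 1 ≤ ℓ → ℓ < b → ds ℓ ≤ dp (ℓ - 1)) ∧
        i0 ≤ dp (b - 1) ∧
        (∀ ℓ < b, ds ℓ < i0) := by
  obtain ⟨hR, -⟩ := hnet
  obtain ⟨k, z, hz0, hzk, hz⟩ := (hwr y0' y0 (.single (Or.inr hr))).exists_seq
  have hk : k ≠ 0 := by
    rintro rfl
    exact (hR _ hr).2.2 (hzk.symm.trans hz0)
  have hzC : ∀ j ≤ k, z j ∈ ⋃ i, T i := by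
    intro j hj
    rw [hTunion, Finset.mem_coe]
    rcases hj.lt_or_eq with hj | rfl
    · exact (hR _ (hz j hj)).1
    · exact hzk ▸ (hR _ hr).1
  obtain ⟨τ, hτ0, hτk, hzτ⟩ := exists_labelling_of_mem_iUnion hk hzC (hz0 ▸ hy0') (hzk ▸ hy0)
  obtain ⟨b, s, hs, hsk⟩ := exists_isClimb τ 0 k hτ0.le hlt (by rw [zero_add, hτk])
  rw [zero_add] at hsk
  refine ⟨b, hs.pos, fun ℓ => (z (s ℓ), z (s ℓ + 1)), τ ∘ s, fun ℓ => τ (s ℓ + 1),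
    fun ℓ hℓ => ⟨hz _ (hsk ℓ hℓ), hzτ _ (hsk ℓ hℓ).le, hzτ _ (hsk ℓ hℓ)⟩,
    hs.start_le, hs.step_lt, hs.le_prev, hs.hi_le, hs.lt_hi⟩

/-- Given a weakly reversible network whose complexes are partitioned into ordered tiers
`T 0 ≻ T 1 ≻ ⋯ ≻ T (P-1)` (smaller index = higher tier), and a reaction `y0 → y0'`
whose source lies in tier `i0` and whose product lies in a strictly higher tier
`i1 < i0`, there are reactions `r 0, …, r (b-1) ∈ R` whose source/product tier indices
`ds ℓ` / `dp ℓ` satisfy: (1) `ds 0 ≤ i1`; (2) `ds ℓ < dp ℓ` for all `ℓ`;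
(3) `ds ℓ ≤ dp (ℓ-1)` for `ℓ ≥ 1`; (4) `dp (b-1) ≥ i0`; (5) `ds ℓ < i0` for all `ℓ`. -/
theorem stmt_16 {N P : ℕ} (C : Finset (Fin N → ℕ)) (R : Finset ((Fin N → ℕ) × (Fin N → ℕ)))
    (hnet : IsNetwork C R) (hwr : WeaklyReversible R)
    (T : Fin P → Set (Fin N → ℕ))
    (hTne : ∀ i, (T i).Nonempty)
    (hTdisj : ∀ i j, i ≠ j → Disjoint (T i) (T j))
    (hTunion : (⋃ i, T i) = (C : Set (Fin N → ℕ)))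
    (y0 y0' : Fin N → ℕ) (hr : (y0, y0') ∈ R)
    (i0 i1 : Fin P) (hy0 : y0 ∈ T i0) (hy0' : y0' ∈ T i1) (hlt : i1 < i0) :
    ∃ b : ℕ, 0 < b ∧
      ∃ (rs : ℕ → (Fin N → ℕ) × (Fin N → ℕ)) (ds dp : ℕ → Fin P),
        (∀ ℓ < b, rs ℓ ∈ R ∧ (rs ℓ).1 ∈ T (ds ℓ) ∧ (rs ℓ).2 ∈ T (dp ℓ)) ∧
        ds 0 ≤ i1 ∧
        (∀ ℓ < b, ds ℓ < dp ℓ) ∧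
        (∀ ℓ, 1 ≤ ℓ → ℓ < b → ds ℓ ≤ dp (ℓ - 1)) ∧
        i0 ≤ dp (b - 1) ∧
        (∀ ℓ < b, ds ℓ < i0) :=
  stmt_16_general C R hnet hwr T hTunion y0 y0' hr i0 i1 hy0 hy0' hlt
end
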